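/- arXiv:1006.0268 — 3 statements merged into one kernel-verified Lean document; each statement's English description precedes it below -/
import Mathlib

section
/- (Stanley's vanishing criterion) Let λ be a partition of k+1 and σ ∈ S_{k+1} with cycle lengths ℓ_1, ..., ℓ_j. Let h_1, ..., h_{k+1} be the hook lengths of λ. If the character value χ^λ(σ) of the irreducible representation ρ_λ of S_{k+1} at σ is nonzero, then ∏_{i=1}^{j}(1 - s^{ℓ_i}) divides ∏_{i=1}^{k+1}(1 - s^{h_i}) in ℤ[s]. -/
/-!
Factor `1 - s^n = -∏_{d ∣ n} Φ_d(s)` into cyclotomic polynomials: the divisibility then says that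
for every `d`, at least as many hook lengths as cycle lengths are divisible by `d`.

Encode `λ ⊢ N` by its beta-set `B = {λ_i + N - 1 - i}`. The hooks of row `i` correspond to the
gaps `m ∉ B` below `b_i = λ_i + N - 1 - i`, with length `b_i - m`, so the hooks divisible by `d`
are counted by the pairs `m < b`, `b ∈ B`, `m ∉ B`, `m ≡ b [MOD d]`.

On the character side, `χ^λ(σ)` is the coefficient of `x^B` in `a_δ · ∏ p_ℓ`. Every factor
`a_δ · ∏_{ℓ ∈ S} p_ℓ` is alternating, so its coefficients vanish at exponents with a repeated
entry; peeling off one `p_ℓ` from a nonzero coefficient therefore slides a bead `b ∈ B` to the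
empty position `b - ℓ`. The number of `d`-divisible hooks is `∑_{b ∈ B} ⌊b / d⌋` minus the number
of congruent pairs in `B`; when `d ∣ ℓ` the move keeps the pairs and lowers the sum by
`ℓ / d ≥ 1`. Peeling off every `p_ℓ` with `d ∣ ℓ` thus uses up at least one `d`-divisible hook
per such cycle.
-/

open Equiv Finset

/-- The character `χ^λ(σ)` of the irreducible representation of `S_N` attached to the
partition `λ ⊢ N` (given by its row-length function `lam`), defined via the Frobenius
character formula: `χ^λ(σ)` is the coefficient of `x^{λ+δ}` (with `δ = (N-1, N-2, …, 0)`)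
in `a_δ(x) · ∏_i p_{ℓ_i}(x)`, where `a_δ = ∑_{w ∈ S_N} sgn(w) ∏_j x_{w(j)}^{δ_j}` is the
Vandermonde alternant, the `ℓ_i` are the cycle lengths of `σ` (fixed points included),
and `p_ℓ = ∑_i x_i^ℓ` is the power sum. -/
noncomputable def frobChar (N : ℕ) (lam : ℕ → ℕ) (σ : Equiv.Perm (Fin N)) : ℤ :=
  MvPolynomial.coeff
    (Finsupp.equivFunOnFinite.symm (fun i : Fin N => lam (i : ℕ) + (N - 1 - (i : ℕ))))
    ((∑ w : Equiv.Perm (Fin N), (Equiv.Perm.sign w : ℤ) •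
        ∏ j : Fin N, (MvPolynomial.X (w j) : MvPolynomial (Fin N) ℤ) ^ (N - 1 - (j : ℕ))) *
      ((σ.cycleType + Multiset.replicate (N - σ.support.card) 1).map
        (fun ℓ => ∑ i : Fin N, (MvPolynomial.X i : MvPolynomial (Fin N) ℤ) ^ ℓ)).prod)

/-- The column lengths (conjugate partition) of the partition with rows `lam`. -/
def conjPart (N : ℕ) (lam : ℕ → ℕ) (j : ℕ) : ℕ :=
  ((Finset.range N).filter fun i => j < lam i).card

/-- The hook length of the cell in (0-indexed) row `i` and column `j`. -/
def hookLen (N : ℕ) (lam : ℕ → ℕ) (i j : ℕ) : ℕ :=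
  (lam i - j) + (conjPart N lam j - i) - 1

theorem Multiset.count_bind_divisors {T : Multiset ℕ} (hT : ∀ n ∈ T, 0 < n) (d : ℕ) :
    (T.bind fun n => n.divisors.val).count d = (T.filter (d ∣ ·)).card := by
  induction T using Multiset.induction_on with
  | empty => simp
  | cons n T ih =>
    simp only [Multiset.mem_cons, forall_eq_or_imp] at hT
    rw [Multiset.cons_bind, Multiset.count_add, ih hT.2, Multiset.filter_cons, Multiset.card_add,
      Multiset.count_eq_of_nodup n.divisors.nodup]
    simp [Nat.mem_divisors, hT.1.ne', apply_ite Multiset.card]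

namespace Polynomial

theorem multiset_prod_one_sub_X_pow_eq_prod_cyclotomic {T : Multiset ℕ} (hT : ∀ n ∈ T, 0 < n) :
    (T.map fun n => (1 - X ^ n : ℤ[X])).prod =
      (-1) ^ T.card * ((T.bind fun n => n.divisors.val).map (cyclotomic · ℤ)).prod := by
  have hfactor : ∀ n ∈ T, (1 - X ^ n : ℤ[X]) = -1 * (n.divisors.val.map (cyclotomic · ℤ)).prod :=
    fun n hn => by
      rw [← Finset.prod_eq_multiset_prod, prod_cyclotomic_eq_X_pow_sub_one (hT n hn)]
      ring
  rw [Multiset.map_congr rfl hfactor, Multiset.prod_map_mul, Multiset.map_const',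
    Multiset.prod_replicate, Multiset.map_bind, Multiset.prod_bind]

theorem multiset_prod_one_sub_X_pow_dvd {L T : Multiset ℕ} (hL : ∀ ℓ ∈ L, 0 < ℓ)
    (hT : ∀ n ∈ T, 0 < n) (hcount : ∀ d, (L.filter (d ∣ ·)).card ≤ (T.filter (d ∣ ·)).card) :
    (L.map fun ℓ => (1 - X ^ ℓ : ℤ[X])).prod ∣ (T.map fun n => (1 - X ^ n : ℤ[X])).prod := by
  rw [multiset_prod_one_sub_X_pow_eq_prod_cyclotomic hL,
    multiset_prod_one_sub_X_pow_eq_prod_cyclotomic hT,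
    ((isUnit_neg_one (α := ℤ[X])).pow _).mul_left_dvd, (isUnit_neg_one.pow _).dvd_mul_left]
  refine Multiset.prod_dvd_prod_of_le (Multiset.map_le_map (Multiset.le_iff_count.2 fun d => ?_))
  rw [Multiset.count_bind_divisors hL, Multiset.count_bind_divisors hT]
  exact hcount d

end Polynomial

def hookCount (d : ℕ) (B : Finset ℕ) : ℕ :=
  ∑ b ∈ B, #{m ∈ range b | m ≡ b [MOD d] ∧ m ∉ B}

def congrPairCount (d : ℕ) (B : Finset ℕ) : ℕ :=
  ∑ b ∈ B, #{m ∈ B | m < b ∧ m ≡ b [MOD d]}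

theorem hookCount_add_congrPairCount {d : ℕ} (hd : 0 < d) (B : Finset ℕ) :
    hookCount d B + congrPairCount d B = ∑ b ∈ B, b / d := by
  rw [hookCount, congrPairCount, ← sum_add_distrib]
  refine sum_congr rfl fun b _ => ?_
  have hclass : #{m ∈ range b | m ≡ b [MOD d]} = b / d := by
    rw [← Nat.count_eq_card_filter_range, Nat.count_modEq_card _ hd]
    simp
  rw [← hclass,
    ← card_filter_add_card_filter_not (s := {m ∈ range b | m ≡ b [MOD d]}) (· ∈ B), add_comm]
  congr 1 <;> congr 1 <;> ext m <;> simp only [mem_filter, mem_range] <;> tauto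

theorem two_mul_congrPairCount (d : ℕ) (B : Finset ℕ) :
    2 * congrPairCount d B = ∑ b ∈ B, #{m ∈ B | m ≠ b ∧ m ≡ b [MOD d]} := by
  have hsymm : ∑ b ∈ B, #{m ∈ B | b < m ∧ m ≡ b [MOD d]} = congrPairCount d B := by
    simp only [congrPairCount, card_filter]
    rw [sum_comm]
    refine sum_congr rfl fun b _ => sum_congr rfl fun m _ => ?_
    simp only [Nat.ModEq.comm (a := b)]
  rw [two_mul]
  nth_rw 2 [← hsymm]
  rw [congrPairCount, ← sum_add_distrib]
  refine sum_congr rfl fun b _ => ?_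
  rw [← card_union_of_disjoint (disjoint_filter.2 fun m _ h1 h2 => by omega), ← filter_or]
  congr 1
  ext m
  simp only [mem_filter, ← or_and_right, ← ne_iff_lt_or_gt]

theorem congrPairCount_map {d : ℕ} (τ : ℕ ≃ ℕ) (hτ : ∀ x, τ x ≡ x [MOD d]) (B : Finset ℕ) :
    congrPairCount d (B.map τ.toEmbedding) = congrPairCount d B := by
  suffices 2 * congrPairCount d (B.map τ.toEmbedding) = 2 * congrPairCount d B by omega
  simp only [two_mul_congrPairCount, sum_map, filter_map, card_map]
  refine sum_congr rfl fun b _ => congrArg card (filter_congr fun m _ => ?_)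
  simp only [Function.comp_apply, toEmbedding_apply, ne_eq, τ.apply_eq_iff_eq]
  exact and_congr_right' ⟨fun h => ((hτ m).symm.trans h).trans (hτ b),
    fun h => ((hτ m).trans h).trans (hτ b).symm⟩

theorem hookCount_map_swap_add {d b ℓ : ℕ} {B : Finset ℕ} (hd : 0 < d) (hb : b ∈ B)
    (hℓb : ℓ ≤ b) (hbℓ : b - ℓ ∉ B) (hdℓ : d ∣ ℓ) :
    hookCount d (B.map (swap b (b - ℓ)).toEmbedding) + ℓ / d = hookCount d B := by
  have hsub : b - ℓ ≡ b [MOD d] := by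
    conv_rhs => rw [← Nat.sub_add_cancel hℓb]
    simpa using (Nat.modEq_zero_iff_dvd.2 hdℓ).symm.add_left (b - ℓ)
  have hswap : ∀ x, swap b (b - ℓ) x ≡ x [MOD d] := fun x => by
    rw [swap_apply_def]
    split_ifs with h1 h2
    exacts [h1 ▸ hsub, h2 ▸ hsub.symm, rfl]
  have hdiv : ∑ x ∈ B.map (swap b (b - ℓ)).toEmbedding, x / d + ℓ / d = ∑ x ∈ B, x / d := by
    rw [sum_map, coe_toEmbedding, ← add_sum_erase _ _ hb, ← add_sum_erase _ _ hb, swap_apply_left,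
      add_right_comm, ← Nat.add_div_of_dvd_left hdℓ, Nat.sub_add_cancel hℓb]
    congr 1
    refine sum_congr rfl fun x hx => ?_
    have hxℓ : x ≠ b - ℓ := by
      rintro rfl
      exact hbℓ (mem_of_mem_erase hx)
    rw [swap_apply_of_ne_of_ne (ne_of_mem_erase hx) hxℓ]
  have h := hookCount_add_congrPairCount hd B
  rw [← hdiv, ← hookCount_add_congrPairCount hd, congrPairCount_map _ hswap] at h
  omega

namespace MvPolynomial

variable {ι R : Type*} [Fintype ι]

theorem exists_coeff_tsub_single_ne_zero_of_coeff_mul_psum_ne_zero [CommSemiring R]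
    {A : MvPolynomial ι R} {v : ι →₀ ℕ} {ℓ : ℕ} (h : coeff v (A * psum ι R ℓ) ≠ 0) :
    ∃ i, ℓ ≤ v i ∧ coeff (v - Finsupp.single i ℓ) A ≠ 0 := by
  rw [psum, mul_sum, coeff_sum] at h
  obtain ⟨i, -, hi⟩ := exists_ne_zero_of_sum_ne_zero h
  rw [X_pow_eq_monomial, coeff_mul_monomial'] at hi
  split_ifs at hi with hle
  · exact ⟨i, by simpa using hle i, by simpa using hi⟩
  · exact absurd rfl hi

variable [DecidableEq ι] [CommRing R]

def IsAlternating (A : MvPolynomial ι R) : Prop :=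
  ∀ w : Perm ι, rename w A = (Perm.sign w : ℤ) • A

theorem isAlternating_alternant (e : ι → ℕ) :
    IsAlternating (∑ w : Perm ι, (Perm.sign w : ℤ) • ∏ j, (X (w j) : MvPolynomial ι R) ^ e j) := by
  intro w
  rw [map_sum, Finset.smul_sum]
  refine Fintype.sum_equiv (Equiv.mulLeft w) _ _ fun u => ?_
  simp only [map_zsmul, map_prod, map_pow, rename_X, coe_mulLeft, Perm.mul_apply, smul_smul,
    Perm.sign_mul, Units.val_mul, ← mul_assoc, Int.units_coe_mul_self, one_mul]

theorem IsAlternating.mul_isSymmetric {A p : MvPolynomial ι R} (hA : A.IsAlternating)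
    (hp : p.IsSymmetric) : (A * p).IsAlternating := fun w => by
  rw [map_mul, hA w, hp w, smul_mul_assoc]

theorem IsAlternating.mul_prod_psum {A : MvPolynomial ι R} (hA : A.IsAlternating)
    (M : Multiset ℕ) : (A * (M.map (psum ι R)).prod).IsAlternating :=
  hA.mul_isSymmetric <| (symmetricSubalgebra ι R).multiset_prod_mem fun _ hp => by
    obtain ⟨ℓ, -, rfl⟩ := Multiset.mem_map.1 hp
    exact psum_isSymmetric ι R ℓ

variable [IsAddTorsionFree R]

theorem IsAlternating.coeff_eq_zero_of_not_injective
    {A : MvPolynomial ι R} (hA : A.IsAlternating) {v : ι →₀ ℕ} (hv : ¬ Function.Injective v) :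
    coeff v A = 0 := by
  obtain ⟨s, t, hst, hne⟩ := Function.not_injective_iff.1 hv
  have hswap : Finsupp.mapDomain (swap s t) v = v := by
    ext a
    rw [Finsupp.mapDomain_equiv_apply, symm_swap, swap_apply_def]
    split_ifs <;> simp_all
  have h := coeff_rename_mapDomain _ (swap s t).injective A v
  rw [hswap, hA, Perm.sign_swap hne, Units.val_neg, Units.val_one, neg_smul, one_smul,
    coeff_neg, neg_eq_iff_add_eq_zero, ← two_nsmul] at h
  exact two_nsmul_eq_zero.1 h

theorem IsAlternating.exists_coeff_ne_zero_of_coeff_mul_psum_ne_zero {A : MvPolynomial ι R}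
    (hA : A.IsAlternating) {v : ι →₀ ℕ} {ℓ : ℕ} (hℓ : 0 < ℓ)
    (h : coeff v (A * psum ι R ℓ) ≠ 0) :
    ∃ v' : ι →₀ ℕ, coeff v' A ≠ 0 ∧ ∃ b ∈ univ.image v, ℓ ≤ b ∧ b - ℓ ∉ univ.image v ∧
      univ.image v' = (univ.image v).map (swap b (b - ℓ)).toEmbedding := by
  have hv : Function.Injective v := by
    by_contra hv
    exact h ((hA.mul_isSymmetric (psum_isSymmetric ι R ℓ)).coeff_eq_zero_of_not_injective hv)
  obtain ⟨i, hℓi, hi⟩ := exists_coeff_tsub_single_ne_zero_of_coeff_mul_psum_ne_zero h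
  set v' := v - Finsupp.single i ℓ
  have hv' : Function.Injective v' := by
    by_contra hv'
    exact hi (hA.coeff_eq_zero_of_not_injective hv')
  have hv'_apply : ∀ t, v' t = if t = i then v i - ℓ else v t := fun t => by
    by_cases ht : t = i <;> simp [v', ht]
  have hgap : ∀ t, v t ≠ v i - ℓ := fun t hvt => by
    by_cases ht : t = i
    · subst ht; omega
    · exact ht (hv' (by rw [hv'_apply, hv'_apply, if_neg ht, if_pos rfl, hvt]))
  refine ⟨v', hi, v i, mem_image_of_mem v (mem_univ i), hℓi, by simpa using hgap, ?_⟩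
  rw [map_eq_image, image_image]
  refine image_congr fun t _ => ?_
  by_cases ht : t = i
  · simp [hv'_apply, ht]
  · simp [hv'_apply, ht, swap_apply_of_ne_of_ne (hv.ne ht) (hgap t)]

theorem IsAlternating.card_le_hookCount {A : MvPolynomial ι R} (hA : A.IsAlternating) {d : ℕ}
    {M : Multiset ℕ} (hM : ∀ ℓ ∈ M, 0 < ℓ ∧ d ∣ ℓ) {v : ι →₀ ℕ}
    (h : coeff v (A * (M.map (psum ι R)).prod) ≠ 0) :
    M.card ≤ hookCount d (univ.image v) := by
  induction M using Multiset.induction_on generalizing v with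
  | empty => simp
  | cons ℓ M ih =>
    obtain ⟨⟨hℓ, hdℓ⟩, hM⟩ := Multiset.forall_mem_cons.1 hM
    rw [Multiset.map_cons, Multiset.prod_cons, mul_comm (psum ι R ℓ), ← mul_assoc] at h
    obtain ⟨v', hv', b, hb, hℓb, hbℓ, himage⟩ :=
      (hA.mul_prod_psum M).exists_coeff_ne_zero_of_coeff_mul_psum_ne_zero hℓ h
    have hd : 0 < d := Nat.pos_of_dvd_of_pos hdℓ hℓ
    have hmove := hookCount_map_swap_add hd hb hℓb hbℓ hdℓ
    have hℓd : 0 < ℓ / d := Nat.div_pos (Nat.le_of_dvd hℓ hdℓ) hd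
    have hrest := himage ▸ ih hM hv'
    rw [Multiset.card_cons]
    omega

end MvPolynomial

section YoungDiagram

variable {N : ℕ} {lam : ℕ → ℕ}

def betaNumber (N : ℕ) (lam : ℕ → ℕ) (i : ℕ) : ℕ := lam i + (N - 1 - i)

def betaSet (N : ℕ) (lam : ℕ → ℕ) : Finset ℕ := (range N).image (betaNumber N lam)

def columnGap (N : ℕ) (lam : ℕ → ℕ) (j : ℕ) : ℕ := N + j - conjPart N lam j

def hookLengths (N : ℕ) (lam : ℕ → ℕ) : Multiset ℕ :=
  ((range N).sigma fun i => range (lam i)).val.map fun c => hookLen N lam c.1 c.2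

theorem prod_prod_hookLen_eq {M : Type*} [CommMonoid M] (f : ℕ → M) :
    ∏ i ∈ range N, ∏ j ∈ range (lam i), f (hookLen N lam i j) =
      ((hookLengths N lam).map f).prod := by
  rw [prod_sigma', prod_eq_multiset_prod, hookLengths, Multiset.map_map]
  rfl

theorem conjPart_le (j : ℕ) : conjPart N lam j ≤ N :=
  (card_filter_le _ _).trans (card_range N).le

theorem conjPart_antitone : Antitone (conjPart N lam) := fun _ _ hj =>
  card_le_card (monotone_filter_right _ fun _ _ h => hj.trans_lt h)

theorem columnGap_strictMono : StrictMono (columnGap N lam) := by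
  refine strictMono_nat_of_lt_succ fun j => ?_
  have := conjPart_antitone (N := N) (lam := lam) (Nat.le_add_right j 1)
  have := conjPart_le (N := N) (lam := lam) j
  simp only [columnGap]
  omega

theorem lt_conjPart_iff (hanti : Antitone lam) (hsupp : ∀ i, N ≤ i → lam i = 0) {i j : ℕ} :
    i < conjPart N lam j ↔ j < lam i := by
  constructor
  · intro hi
    by_contra! hj
    have hsub : {u ∈ range N | j < lam u} ⊆ range i := fun u hu => by
      simp only [mem_filter, mem_range] at hu ⊢
      by_contra! hiu
      exact absurd (hj.trans_lt hu.2) (hanti hiu).not_gt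
    exact (card_le_card hsub).not_gt (by rwa [card_range])
  · intro hj
    have hiN : i < N := by
      by_contra! hiN
      simp [hsupp i hiN] at hj
    have hsub : range (i + 1) ⊆ {u ∈ range N | j < lam u} := fun u hu => by
      simp only [mem_filter, mem_range] at hu ⊢
      exact ⟨by omega, hj.trans_le (hanti (by omega))⟩
    exact (card_range (i + 1)).symm.trans_le (card_le_card hsub)

theorem betaNumber_strictAntiOn (hanti : Antitone lam) :
    StrictAntiOn (betaNumber N lam) (range N) := fun i _ u hu hiu => by
  have := hanti hiu.le
  simp only [coe_range, Set.mem_Iio] at hu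
  simp only [betaNumber]
  omega

variable (hanti : Antitone lam) (hsupp : ∀ i, N ≤ i → lam i = 0)
include hanti hsupp

theorem hookLen_add_columnGap {i j : ℕ} (hj : j < lam i) :
    hookLen N lam i j + columnGap N lam j = betaNumber N lam i := by
  have := (lt_conjPart_iff hanti hsupp).2 hj
  have := conjPart_le (N := N) (lam := lam) j
  simp only [hookLen, columnGap, betaNumber]
  omega

theorem hookLen_pos {i j : ℕ} (hj : j < lam i) : 0 < hookLen N lam i j := by
  have := (lt_conjPart_iff hanti hsupp).2 hj
  simp only [hookLen]
  omega

theorem columnGap_notMem_betaSet {i j : ℕ} (hj : j < lam i) :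
    columnGap N lam j ∉ betaSet N lam := by
  simp only [betaSet, mem_image, mem_range, not_exists, not_and]
  intro u hu hgap
  have := conjPart_le (N := N) (lam := lam) j
  have := (lt_conjPart_iff hanti hsupp).2 hj
  by_cases hcu : u < conjPart N lam j
  · have := (lt_conjPart_iff hanti hsupp).1 hcu
    simp only [columnGap, betaNumber] at hgap
    omega
  · have := mt (lt_conjPart_iff hanti hsupp).2 hcu
    simp only [columnGap, betaNumber] at hgap
    omega

theorem image_columnGap {i : ℕ} (hi : i < N) :
    (range (lam i)).image (columnGap N lam) =
      {m ∈ range (betaNumber N lam i) | m ∉ betaSet N lam} := by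
  refine eq_of_subset_of_card_le (fun m hm => ?_) ?_
  · obtain ⟨j, hj, rfl⟩ := mem_image.1 hm
    rw [mem_range] at hj
    have := hookLen_add_columnGap hanti hsupp hj
    have := hookLen_pos hanti hsupp hj
    exact mem_filter.2 ⟨mem_range.2 (by omega), columnGap_notMem_betaSet hanti hsupp hj⟩
  · -- the `N - 1 - i` beta numbers below row `i` all lie under `betaNumber N lam i`
    have hbelow : (Ioo i N).image (betaNumber N lam) ⊆
        {m ∈ range (betaNumber N lam i) | m ∈ betaSet N lam} := fun m hm => by
      obtain ⟨u, hu, rfl⟩ := mem_image.1 hm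
      rw [mem_Ioo] at hu
      exact mem_filter.2 ⟨mem_range.2 (betaNumber_strictAntiOn hanti
        (mem_range.2 (hu.1.trans hu.2)) (mem_range.2 hu.2) hu.1),
        mem_image_of_mem _ (mem_range.2 hu.2)⟩
    have hcard := card_le_card hbelow
    rw [card_image_of_injOn ((betaNumber_strictAntiOn hanti).injOn.mono
      (coe_subset.2 fun u hu => mem_range.2 (mem_Ioo.1 hu).2)),
      Nat.card_Ioo] at hcard
    have hsplit :=
      card_filter_add_card_filter_not (s := range (betaNumber N lam i)) (· ∈ betaSet N lam)
    rw [card_image_of_injective _ columnGap_strictMono.injective, card_range]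
    simp only [card_range, betaNumber] at hsplit hcard ⊢
    omega

theorem card_filter_dvd_hookLen {i : ℕ} (hi : i < N) (d : ℕ) :
    #{j ∈ range (lam i) | d ∣ hookLen N lam i j} =
      #{m ∈ range (betaNumber N lam i) | m ≡ betaNumber N lam i [MOD d] ∧ m ∉ betaSet N lam} := by
  have hmod : ∀ j ∈ range (lam i),
      d ∣ hookLen N lam i j ↔ columnGap N lam j ≡ betaNumber N lam i [MOD d] := fun j hj => by
    have := hookLen_add_columnGap hanti hsupp (mem_range.1 hj)
    rw [Nat.modEq_iff_dvd' (by omega), ← this, Nat.add_sub_cancel]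
  have hgaps :
      {m ∈ range (betaNumber N lam i) | m ≡ betaNumber N lam i [MOD d] ∧ m ∉ betaSet N lam} =
        ((range (lam i)).image (columnGap N lam)).filter (· ≡ betaNumber N lam i [MOD d]) := by
    rw [image_columnGap hanti hsupp hi, filter_filter]
    simp only [and_comm]
  rw [hgaps, filter_image, card_image_of_injective _ columnGap_strictMono.injective,
    filter_congr hmod]

theorem card_filter_dvd_hookLengths (d : ℕ) :
    ((hookLengths N lam).filter (d ∣ ·)).card = hookCount d (betaSet N lam) := by
  have hcount : hookCount d (betaSet N lam) = ∑ i ∈ range N,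
      #{m ∈ range (betaNumber N lam i) | m ≡ betaNumber N lam i [MOD d] ∧ m ∉ betaSet N lam} :=
    sum_image (betaNumber_strictAntiOn hanti).injOn
  rw [hookLengths, Multiset.filter_map, Multiset.card_map, ← filter_val, ← card_def, card_filter,
    sum_sigma, hcount]
  refine sum_congr rfl fun i hi => ?_
  rw [← card_filter_dvd_hookLen hanti hsupp (mem_range.1 hi), card_filter]
  rfl

theorem hookLengths_pos : ∀ h ∈ hookLengths N lam, 0 < h := by
  simp only [hookLengths, Multiset.mem_map, mem_val, mem_sigma, mem_range]
  rintro _ ⟨c, ⟨-, hc⟩, rfl⟩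
  exact hookLen_pos hanti hsupp hc

end YoungDiagram

def cycleLengths {N : ℕ} (σ : Perm (Fin N)) : Multiset ℕ :=
  σ.cycleType + Multiset.replicate (N - #σ.support) 1

theorem cycleLengths_pos {N : ℕ} (σ : Perm (Fin N)) : ∀ ℓ ∈ cycleLengths σ, 0 < ℓ := by
  intro ℓ hℓ
  rcases Multiset.mem_add.1 hℓ with h | h
  · exact zero_lt_one.trans (Perm.one_lt_of_mem_cycleType h)
  · rw [Multiset.eq_of_mem_replicate h]
    exact one_pos

open MvPolynomial in
theorem card_filter_dvd_cycleLengths_le_hookCount {N : ℕ} {lam : ℕ → ℕ} {σ : Perm (Fin N)}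
    (hne : frobChar N lam σ ≠ 0) (d : ℕ) :
    ((cycleLengths σ).filter (d ∣ ·)).card ≤ hookCount d (betaSet N lam) := by
  set v : Fin N →₀ ℕ := Finsupp.equivFunOnFinite.symm fun i => betaNumber N lam i
  set alternant : MvPolynomial (Fin N) ℤ :=
    ∑ w : Perm (Fin N), (Perm.sign w : ℤ) • ∏ j : Fin N, X (w j) ^ (N - 1 - (j : ℕ))
  have hv : univ.image v = betaSet N lam := by
    ext m
    simp [v, betaSet, Fin.exists_iff]
  have hsplit : coeff v (alternant * (((cycleLengths σ).filter (¬ d ∣ ·)).map (psum _ ℤ)).prod *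
      (((cycleLengths σ).filter (d ∣ ·)).map (psum _ ℤ)).prod) ≠ 0 := by
    rwa [mul_assoc, ← Multiset.prod_add, ← Multiset.map_add, add_comm, Multiset.filter_add_not]
  rw [← hv]
  refine ((isAlternating_alternant _).mul_prod_psum _).card_le_hookCount (fun ℓ hℓ => ?_) hsplit
  rw [Multiset.mem_filter] at hℓ
  exact ⟨cycleLengths_pos σ ℓ hℓ.1, hℓ.2⟩

theorem stanley_vanishing_criterion_general (k : ℕ) (lam : ℕ → ℕ)
    (hanti : Antitone lam)
    (hsupp : ∀ i, k + 1 ≤ i → lam i = 0)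
    (σ : Equiv.Perm (Fin (k + 1)))
    (hne : frobChar (k + 1) lam σ ≠ 0) :
    ((σ.cycleType + Multiset.replicate ((k + 1) - σ.support.card) 1).map
        (fun ℓ => 1 - (Polynomial.X : Polynomial ℤ) ^ ℓ)).prod ∣
      ∏ i ∈ Finset.range (k + 1), ∏ j ∈ Finset.range (lam i),
        (1 - (Polynomial.X : Polynomial ℤ) ^ hookLen (k + 1) lam i j) := by
  rw [prod_prod_hookLen_eq fun h => 1 - (Polynomial.X : Polynomial ℤ) ^ h]
  refine Polynomial.multiset_prod_one_sub_X_pow_dvd (cycleLengths_pos σ)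
    (hookLengths_pos hanti hsupp) fun d => ?_
  rw [card_filter_dvd_hookLengths hanti hsupp]
  exact card_filter_dvd_cycleLengths_le_hookCount hne d

/-- (Stanley's vanishing criterion)  Let `λ ⊢ k+1` be a partition with row lengths
`lam` and hook lengths `h_1, …, h_{k+1}`, and let `σ ∈ S_{k+1}` have cycle lengths
`ℓ_1, …, ℓ_j`.  If `χ^λ(σ) ≠ 0` then `∏_i (1 - s^{ℓ_i})` divides `∏_i (1 - s^{h_i})`
in `ℤ[s]`. -/
theorem stanley_vanishing_criterion (k : ℕ) (lam : ℕ → ℕ)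
    (hanti : Antitone lam)
    (hsum : ∑ i ∈ Finset.range (k + 1), lam i = k + 1)
    (hsupp : ∀ i, k + 1 ≤ i → lam i = 0)
    (σ : Equiv.Perm (Fin (k + 1)))
    (hne : frobChar (k + 1) lam σ ≠ 0) :
    ((σ.cycleType + Multiset.replicate ((k + 1) - σ.support.card) 1).map
        (fun ℓ => 1 - (Polynomial.X : Polynomial ℤ) ^ ℓ)).prod ∣
      ∏ i ∈ Finset.range (k + 1), ∏ j ∈ Finset.range (lam i),
        (1 - (Polynomial.X : Polynomial ℤ) ^ hookLen (k + 1) lam i j) :=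
  stanley_vanishing_criterion_general k lam hanti hsupp σ hne
end

section
/- For every n ≥ 3, the multiplicity of the irreducible S_{n+1}-representation indexed by the partition (n-1,2) in Ind_{C_{n+1}}^{S_{n+1}} ℂ equals ⌊(n-1)/2⌋. Equivalently, Sym²𝔥 ⊖ 𝔥 ⊖ ℂ occurs with multiplicity ⌊(n-1)/2⌋ in this induced representation. -/
open Equiv Finset

/-- The row lengths of the partition `(n-1, 2)` of `n + 1`. -/
def partN2 (n : ℕ) : ℕ → ℕ := fun i => if i = 0 then n - 1 else if i = 1 then 2 else 0

/-!
Expanding the Frobenius formula, `χ^λ(σ) = ∑_w sgn(w) [x^{λ+δ-w(δ)}] p_ρ(σ)`. For `λ = (n-1, 2)`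
the condition `w(δ) ≤ λ + δ` forces `w` to fix every index `≥ 2`, so only `w = 1` and
`w = (0 1)` survive and `χ(σ) = [x₀^{n-1} x₁²] p_ρ(σ) - [x₀ⁿ x₁] p_ρ(σ)`.

No point is fixed by a nontrivial power of the `(n+1)`-cycle `g`, so all cycles of `g^t` have
length `m = orderOf (g^t)`, and `p_m^d` is `p_1^d` with every exponent multiplied by `m`.
Reading off binomial coefficients: `χ(1) = C(n+1, 2) - (n+1)`, `χ(g^t) = t` when `2t = n+1`, and
`χ(g^t) = 0` otherwise (then `m ≥ 3` divides neither `1` nor `2`). Summing over `t` gives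
`(n+1) ⌊(n-1)/2⌋`.
-/

open MvPolynomial

namespace MvPolynomial

variable {σ R : Type*} [CommSemiring R]

theorem coeff_expand_eq_zero_of_not_dvd {p : ℕ} (φ : MvPolynomial σ R) {v : σ →₀ ℕ} {i : σ}
    (h : ¬ p ∣ v i) : (expand p φ).coeff v = 0 := by
  classical
  induction φ using induction_on' with
  | monomial d r =>
    rw [expand_monomial, coeff_monomial, if_neg]
    rintro rfl
    exact h (by simp)
  | add φ ψ hφ hψ => rw [map_add, coeff_add, hφ, hψ, add_zero]

theorem prod_X_perm_pow_eq_monomial [Fintype σ] (w : Perm σ) (e : σ → ℕ) :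
    ∏ j, (X (w j) : MvPolynomial σ R) ^ e j =
      monomial (Finsupp.equivFunOnFinite.symm (e ∘ w.symm)) 1 := by
  classical
  rw [Fintype.prod_equiv w _ (fun x => (X x : MvPolynomial σ R) ^ e (w.symm x)) (by simp)]
  simp [monomial_eq, Finsupp.prod_fintype]

variable [Fintype σ]

theorem psum_eq_expand (m : ℕ) : psum σ R m = expand m (∑ i, X i) := by
  simp [psum, expand_X]

theorem coeff_psum_pow_eq_zero_of_not_dvd {m d : ℕ} {v : σ →₀ ℕ} {i : σ} (h : ¬ m ∣ v i) :
    (psum σ R m ^ d).coeff v = 0 := by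
  rw [psum_eq_expand, ← map_pow]
  exact coeff_expand_eq_zero_of_not_dvd _ h

theorem coeff_psum_pow_single_add_single [DecidableEq σ] {a b : σ} (hab : a ≠ b) {m : ℕ}
    (hm : m ≠ 0) (i j : ℕ) :
    (psum σ R m ^ (i + j)).coeff (Finsupp.single a (m * i) + Finsupp.single b (m * j)) =
      (i + j).choose j := by
  have hsupp : (Finsupp.single a i + Finsupp.single b j).support ⊆ {a, b} :=
    Finsupp.support_add.trans <| union_subset
      (Finsupp.support_single_subset.trans (by simp))
      (Finsupp.support_single_subset.trans (by simp))
  rw [psum_eq_expand, ← map_pow, ← smul_eq_mul, ← smul_eq_mul, ← Finsupp.smul_single,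
    ← Finsupp.smul_single, ← smul_add, coeff_expand_smul _ hm, coeff_sum_X_pow_of_fintype,
    if_pos (by simp [Finsupp.sum_add_index']), Finsupp.multinomial_eq_of_support_subset hsupp,
    Nat.binomial_eq_choose hab]
  simp [hab, Nat.choose_symm_add (a := i) (b := j)]

end MvPolynomial

namespace Equiv.Perm

theorem apply_eq_self_of_le_apply {α : Type*} [PartialOrder α] [WellFoundedGT α] (u : Perm α)
    {s : Set α} (hs : IsUpperSet s) (h : ∀ i ∈ s, i ≤ u i) {i : α} (hi : i ∈ s) : u i = i := by
  induction i using WellFoundedGT.induction with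
  | _ i ih =>
    by_contra hne
    have hlt : i < u i := lt_of_le_of_ne (h i hi) (Ne.symm hne)
    exact hne (u.injective (ih (u i) hlt (hs hlt.le hi)))

variable {α : Type*} [DecidableEq α]

theorem eq_one_or_eq_swap_of_apply_eq_self {w : Perm α} {a b : α}
    (h : ∀ x, x ≠ a → x ≠ b → w x = x) : w = 1 ∨ w = swap a b := by
  have key : ∀ x, w x = x ∨ w x = a ∨ w x = b := fun x => by
    by_contra! hx
    exact hx.1 (w.injective (h _ hx.2.1 hx.2.2))
  have hinj : ∀ x y, w x = w y → x = y := fun _ _ => w.injective.eq_iff.mp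
  by_cases hwa : w a = a
  · left
    ext x
    grind [one_apply]
  · right
    ext x
    grind

variable [Fintype α]

theorem exists_pow_apply_eq_self_of_mem_cycleType {σ : Perm α} {ℓ : ℕ} (hℓ : ℓ ∈ σ.cycleType) :
    ∃ x, (σ ^ ℓ) x = x := by
  rw [cycleType_def, Multiset.mem_map] at hℓ
  obtain ⟨c, hc, rfl⟩ := hℓ
  have hcyc := (mem_cycleFactorsFinset_iff.mp hc).1
  obtain ⟨x, hx⟩ := hcyc.nonempty_support
  refine ⟨x, ?_⟩
  rw [← cycleOf_pow_apply_self, ← cycle_is_cycleOf hx hc, Function.comp_apply, ← hcyc.orderOf,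
    pow_orderOf_eq_one, one_apply]

theorem cycleType_add_replicate_eq_replicate_orderOf {σ : Perm α}
    (h : ∀ x (k : ℕ), (σ ^ k) x = x → σ ^ k = 1) :
    σ.cycleType + Multiset.replicate (Fintype.card α - #σ.support) 1 =
      Multiset.replicate (Fintype.card α / orderOf σ) (orderOf σ) := by
  rcases eq_or_ne σ 1 with rfl | hσ
  · simp
  have hsupp : σ.support = univ :=
    eq_univ_of_forall fun x => mem_support.mpr fun hx => hσ (by simpa using h x 1 (by simpa))
  have hmem : ∀ ℓ ∈ σ.cycleType, ℓ = orderOf σ := fun ℓ hℓ =>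
    have ⟨x, hx⟩ := exists_pow_apply_eq_self_of_mem_cycleType hℓ
    Nat.dvd_antisymm (dvd_of_mem_cycleType hℓ) (orderOf_dvd_of_pow_eq_one (h x ℓ hx))
  have hcT := Multiset.eq_replicate_card.mpr hmem
  have hsum := σ.sum_cycleType
  rw [hcT, Multiset.sum_replicate, smul_eq_mul, hsupp, card_univ] at hsum
  rw [hsupp, card_univ, Nat.sub_self, Multiset.replicate_zero, add_zero, hcT, ← hsum,
    Nat.mul_div_cancel _ (orderOf_pos σ)]

end Equiv.Perm

theorem orderOf_pow_eq_one_iff_of_lt {G : Type*} [Monoid G] {g : G} {t : ℕ} (ht : t < orderOf g) :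
    orderOf (g ^ t) = 1 ↔ t = 0 := by
  rw [orderOf_eq_one_iff]
  exact ⟨fun h => by_contra fun h0 => pow_ne_one_of_lt_orderOf h0 ht h, fun h => h ▸ pow_zero g⟩

theorem orderOf_pow_eq_two_iff_of_lt {G : Type*} [Monoid G] {g : G} {t : ℕ} (ht : t < orderOf g) :
    orderOf (g ^ t) = 2 ↔ 2 * t = orderOf g := by
  constructor
  · intro h
    have ht0 : t ≠ 0 := by rintro rfl; simp at h
    obtain ⟨k, hk⟩ := orderOf_dvd_of_pow_eq_one (by rw [pow_mul', ← h, pow_orderOf_eq_one] :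
      g ^ (2 * t) = 1)
    rcases k with _ | _ | k <;> [omega; omega; nlinarith]
  · intro h
    refine orderOf_eq_prime (by rw [← pow_mul', h, pow_orderOf_eq_one]) ?_
    exact pow_ne_one_of_lt_orderOf (by omega) ht

/-- The exponent vector of `w • x^δ`, where `δ = (N-1, …, 1, 0)` is the staircase. -/
noncomputable def permStaircase {N : ℕ} (w : Perm (Fin N)) : Fin N →₀ ℕ :=
  Finsupp.equivFunOnFinite.symm fun i => N - 1 - (w⁻¹ i : ℕ)

noncomputable def shiftedPartition (N : ℕ) (lam : ℕ → ℕ) : Fin N →₀ ℕ :=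
  Finsupp.equivFunOnFinite.symm fun i => lam i + (N - 1 - i)

noncomputable def psumCycleType {N : ℕ} (σ : Perm (Fin N)) : MvPolynomial (Fin N) ℤ :=
  ((σ.cycleType + Multiset.replicate (N - #σ.support) 1).map (psum (Fin N) ℤ)).prod

theorem frobChar_eq_sum_sign_mul_coeff (N : ℕ) (lam : ℕ → ℕ) (σ : Perm (Fin N)) :
    frobChar N lam σ = ∑ w : Perm (Fin N), (Perm.sign w : ℤ) *
      coeff (shiftedPartition N lam) (monomial (permStaircase w) 1 * psumCycleType σ) := by
  simp_rw [frobChar, sum_mul, coeff_sum, smul_mul_assoc, coeff_smul, zsmul_eq_mul,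
    prod_X_perm_pow_eq_monomial]
  rfl

theorem partN2_of_two_le {n i : ℕ} (hi : 2 ≤ i) : partN2 n i = 0 := by
  simp [partN2, show i ≠ 0 by omega, show i ≠ 1 by omega]

theorem Fin.eq_zero_or_eq_one_or_two_le {n : ℕ} (hn : 1 ≤ n) (x : Fin (n + 1)) :
    x = 0 ∨ x = 1 ∨ (2 ≤ (x : ℕ) ∧ x ≠ 0 ∧ x ≠ 1) := by
  simp only [ne_eq, Fin.ext_iff, Fin.val_zero, Fin.val_one',
    Nat.mod_eq_of_lt (show 1 < n + 1 by omega)]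
  omega

theorem eq_one_or_eq_swap_of_permStaircase_le {n : ℕ} (hn : 1 ≤ n) {w : Perm (Fin (n + 1))}
    (hle : permStaircase w ≤ shiftedPartition (n + 1) (partN2 n)) : w = 1 ∨ w = swap 0 1 := by
  have hupper : IsUpperSet {x : Fin (n + 1) | 2 ≤ (x : ℕ)} :=
    fun _ b hab (ha : 2 ≤ _) => show 2 ≤ (b : ℕ) from ha.trans hab
  have hmono : ∀ x ∈ {x : Fin (n + 1) | 2 ≤ (x : ℕ)}, x ≤ w⁻¹ x := fun x (hx : 2 ≤ (x : ℕ)) => by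
    have := hle x
    simp only [permStaircase, shiftedPartition, Finsupp.coe_equivFunOnFinite_symm,
      partN2_of_two_le hx] at this
    rw [Fin.le_def]
    omega
  refine Perm.eq_one_or_eq_swap_of_apply_eq_self fun x hx0 hx1 => ?_
  obtain ⟨hx, -⟩ := (Fin.eq_zero_or_eq_one_or_two_le hn x).resolve_left hx0 |>.resolve_left hx1
  exact Perm.eq_inv_iff_eq.mp (w⁻¹.apply_eq_self_of_le_apply hupper hmono hx).symm

theorem frobChar_partN2 {n : ℕ} (hn : 1 ≤ n) (σ : Perm (Fin (n + 1))) :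
    frobChar (n + 1) (partN2 n) σ =
      coeff (Finsupp.single 0 (n - 1) + Finsupp.single 1 2) (psumCycleType σ) -
        coeff (Finsupp.single 0 n + Finsupp.single 1 1) (psumCycleType σ) := by
  have h1mod : 1 % (n + 1) = 1 := Nat.mod_eq_of_lt (by omega)
  have h01 : (0 : Fin (n + 1)) ≠ 1 := by simp [Fin.ext_iff]; omega
  have h1 : shiftedPartition (n + 1) (partN2 n) =
      permStaircase 1 + (Finsupp.single 0 (n - 1) + Finsupp.single 1 2) := by
    ext x
    rcases Fin.eq_zero_or_eq_one_or_two_le hn x with rfl | rfl | ⟨hx, hx0, hx1⟩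
    · simp [shiftedPartition, permStaircase, h01, partN2]; omega
    · simp [shiftedPartition, permStaircase, h01.symm, h1mod, partN2]; omega
    · simp [shiftedPartition, permStaircase, hx0, hx1, partN2_of_two_le hx]
  have hs : shiftedPartition (n + 1) (partN2 n) =
      permStaircase (swap 0 1) + (Finsupp.single 0 n + Finsupp.single 1 1) := by
    ext x
    rcases Fin.eq_zero_or_eq_one_or_two_le hn x with rfl | rfl | ⟨hx, hx0, hx1⟩
    · simp [shiftedPartition, permStaircase, h01, h1mod, partN2]
    · simp [shiftedPartition, permStaircase, h01.symm, h1mod, partN2]; omega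
    · simp [shiftedPartition, permStaircase, hx0, hx1, partN2_of_two_le hx,
        swap_apply_of_ne_of_ne]
  rw [frobChar_eq_sum_sign_mul_coeff, ← sum_subset (subset_univ {1, swap 0 1}),
    sum_pair (fun h => h01 (by simpa using congr($h 0))), Perm.sign_one, Perm.sign_swap h01]
  · rw [h1, coeff_monomial_mul, ← h1, hs, coeff_monomial_mul]
    push_cast
    ring
  · intro w _ hw
    rw [coeff_monomial_mul', if_neg, mul_zero]
    intro hle
    rcases eq_one_or_eq_swap_of_permStaircase_le hn hle with rfl | rfl <;> simp at hw

theorem frobChar_partN2_of_psumCycleType_eq_pow {n m d : ℕ} (hn : 1 ≤ n) (hmd : m * d = n + 1)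
    {σ : Perm (Fin (n + 1))} (hσ : psumCycleType σ = psum (Fin (n + 1)) ℤ m ^ d) :
    frobChar (n + 1) (partN2 n) σ =
      if m = 1 then ((n + 1).choose 2 : ℤ) - (n + 1) else if m = 2 then (d : ℤ) else 0 := by
  have h01 : (0 : Fin (n + 1)) ≠ 1 := by simp [Fin.ext_iff]; omega
  rw [frobChar_partN2 hn, hσ]
  split_ifs with hm1 hm2
  · subst hm1
    obtain rfl : d = n + 1 := by omega
    have h2 := coeff_psum_pow_single_add_single (R := ℤ) h01 one_ne_zero (n - 1) 2
    have h1 := coeff_psum_pow_single_add_single (R := ℤ) h01 one_ne_zero n 1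
    rw [show n - 1 + 2 = n + 1 by omega] at h2
    simp only [one_mul, Nat.choose_one_right] at h1 h2
    rw [h2, h1]
    push_cast
    ring
  · subst hm2
    have h2 := coeff_psum_pow_single_add_single (R := ℤ) h01 two_ne_zero (d - 1) 1
    rw [show 2 * (d - 1) = n - 1 by omega, show d - 1 + 1 = d by omega,
      Nat.choose_one_right] at h2
    rw [h2, coeff_psum_pow_eq_zero_of_not_dvd (i := 1) (by simp [h01.symm]), sub_zero]
  · have hndvd : ∀ k, 0 < k → k < 3 → ¬ m ∣ k := fun k hk hk3 h => by
      have := Nat.le_of_dvd hk h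
      have : m ≠ 0 := by rintro rfl; omega
      omega
    rw [coeff_psum_pow_eq_zero_of_not_dvd (i := 1) (by simpa [h01.symm] using hndvd 2),
      coeff_psum_pow_eq_zero_of_not_dvd (i := 1) (by simpa [h01.symm] using hndvd 1), sub_zero]

theorem Equiv.Perm.IsCycle.psumCycleType_pow {N : ℕ} {c : Perm (Fin N)} (hc : c.IsCycle)
    (hsupp : c.support = univ) (t : ℕ) :
    psumCycleType (c ^ t) = psum (Fin N) ℤ (orderOf (c ^ t)) ^ (N / orderOf (c ^ t)) := by
  have hfree : ∀ (x : Fin N) (k : ℕ), ((c ^ t) ^ k) x = x → (c ^ t) ^ k = 1 := fun x k h => by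
    rw [← pow_mul] at h ⊢
    exact (hc.pow_eq_one_iff' (mem_support.mp (hsupp ▸ mem_univ x))).mpr h
  have := Perm.cycleType_add_replicate_eq_replicate_orderOf hfree
  rw [Fintype.card_fin] at this
  rw [psumCycleType, this, Multiset.map_replicate, Multiset.prod_replicate]

theorem frobChar_partN2_finRotate_pow {n : ℕ} (hn : 1 ≤ n) {t : ℕ} (ht : t < n + 1) :
    frobChar (n + 1) (partN2 n) (finRotate (n + 1) ^ t) =
      if t = 0 then ((n + 1).choose 2 : ℤ) - (n + 1) else if 2 * t = n + 1 then (t : ℤ) else 0 := by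
  have hc : (finRotate (n + 1)).IsCycle := isCycle_finRotate_of_le (by omega)
  have hsupp : (finRotate (n + 1)).support = univ := support_finRotate_of_le (by omega)
  have hord : orderOf (finRotate (n + 1)) = n + 1 := by
    rw [hc.orderOf, hsupp, card_univ, Fintype.card_fin]
  have hdvd : orderOf (finRotate (n + 1) ^ t) ∣ n + 1 := (orderOf_pow_dvd t).trans (dvd_of_eq hord)
  have ht' : t < orderOf (finRotate (n + 1)) := by rwa [hord]
  rw [frobChar_partN2_of_psumCycleType_eq_pow hn (Nat.mul_div_cancel' hdvd)
    (hc.psumCycleType_pow hsupp t)]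
  have hm2 : orderOf (finRotate (n + 1) ^ t) = 2 ↔ 2 * t = n + 1 := by
    rw [orderOf_pow_eq_two_iff_of_lt ht', hord]
  simp only [orderOf_pow_eq_one_iff_of_lt ht', hm2]
  split_ifs with ht0 ht2
  · rfl
  · rw [hm2.mpr ht2, show (n + 1) / 2 = t by omega]
  · rfl

theorem sum_frobChar_partN2_finRotate_pow {n : ℕ} (hn : 1 ≤ n) :
    ∑ t ∈ range (n + 1), frobChar (n + 1) (partN2 n) (finRotate (n + 1) ^ t) =
      (n + 1) * ((n - 1) / 2 : ℕ) := by
  have hsplit : ∀ t ∈ range (n + 1), frobChar (n + 1) (partN2 n) (finRotate (n + 1) ^ t) =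
      (if t = 0 then ((n + 1).choose 2 : ℤ) - (n + 1) else 0) +
        if 2 * t = n + 1 then (t : ℤ) else 0 := fun t ht => by
    rw [frobChar_partN2_finRotate_pow hn (mem_range.mp ht)]
    split_ifs <;> first | rfl | omega
  have hchoose : ((n + 1).choose 2 : ℤ) * 2 = (n + 1) * n := by
    exact_mod_cast (Nat.add_one_mul_choose_eq n 1).symm.trans (by simp)
  rw [sum_congr rfl hsplit, sum_add_distrib, sum_ite_eq' _ _ _, if_pos (by simp)]
  obtain ⟨r, rfl | rfl⟩ := Nat.even_or_odd' n
  · rw [sum_eq_zero fun t _ => if_neg (by omega), show (2 * r - 1) / 2 = r - 1 by omega]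
    push_cast [show 1 ≤ r by omega] at hchoose ⊢
    linarith
  · rw [sum_eq_single_of_mem (r + 1) (by simp; omega) fun t _ ht => if_neg (by omega),
      if_pos (by omega), show (2 * r + 1 - 1) / 2 = r by omega]
    push_cast at hchoose ⊢
    linarith

/-- For every `n ≥ 3`, the multiplicity of the irreducible `S_{n+1}`-representation
`ρ_{(n-1,2)}` (i.e. `Sym²𝔥 ⊖ 𝔥 ⊖ ℂ`) in `Ind_{C_{n+1}}^{S_{n+1}} ℂ` — computed
by Frobenius reciprocity as `(1/(n+1)) ∑_t χ^{(n-1,2)}(g^t)` for `g` the `(n+1)`-cycle —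
equals `⌊(n-1)/2⌋`. -/
theorem mult_partN2_in_ind_cyclic (n : ℕ) (hn : 3 ≤ n) :
    (1 / ((n : ℂ) + 1)) * ∑ t ∈ Finset.range (n + 1),
        (frobChar (n + 1) (partN2 n) ((finRotate (n + 1)) ^ t) : ℂ) =
      (((n - 1) / 2 : ℕ) : ℂ) := by
  have hsum := sum_frobChar_partN2_finRotate_pow (show 1 ≤ n by omega)
  rw [← Int.cast_sum, hsum]
  simp only [Int.cast_mul, Int.cast_add, Int.cast_natCast, Int.cast_one]
  field_simp
end

section
/- For a fixed partition λ of k, and for n ≥ k + λ_1, let λ[n] = (n - k, λ_1, ..., λ_r) be the padded partition of n. Then the dimension of the irreducible S_n-representation ρ_{λ[n]} is a polynomial function of n of degree k = |λ| with leading coefficient (dim ρ_λ)/k!, where ρ_λ is the irreducible S_k-representation of shape λ. -/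
open Finset

/-- The cells of the Young diagram with row lengths `lam`. -/
def sytCells (N : ℕ) (lam : ℕ → ℕ) : Finset (ℕ × ℕ) :=
  (Finset.range N ×ˢ Finset.range N).filter fun c => c.2 < lam c.1

/-- Standard Young tableaux: bijective fillings increasing along rows and columns. -/
def IsSYT (N : ℕ) (lam : ℕ → ℕ) (f : sytCells N lam → Fin (sytCells N lam).card) : Prop :=
  Function.Bijective f ∧
    (∀ c d : sytCells N lam, (c : ℕ × ℕ).1 = (d : ℕ × ℕ).1 →
      (c : ℕ × ℕ).2 < (d : ℕ × ℕ).2 → f c < f d) ∧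
    (∀ c d : sytCells N lam, (c : ℕ × ℕ).2 = (d : ℕ × ℕ).2 →
      (c : ℕ × ℕ).1 < (d : ℕ × ℕ).1 → f c < f d)

/-- The number of standard Young tableaux of the shape with row lengths `lam`
(equivalently, the dimension of the corresponding irreducible representation of the
symmetric group). -/
noncomputable def sytCard (N : ℕ) (lam : ℕ → ℕ) : ℕ :=
  (@Finset.filter _ (fun f => IsSYT N lam f) (Classical.decPred _) Finset.univ).card

/-- The row lengths of the padded partition `λ[n] = (n - k, λ_1, …, λ_r)`. -/
def paddedRows (k n : ℕ) (lam : ℕ → ℕ) : ℕ → ℕ :=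
  fun i => if i = 0 then n - k else lam (i - 1)

/-- auxiliary: SYT count as a function of the cell set only -/
noncomputable def auxCard (C : Finset (ℕ × ℕ)) : ℕ :=
  (@Finset.filter _ (fun f : C → Fin C.card =>
      Function.Bijective f ∧
      (∀ c d : C, (c : ℕ × ℕ).1 = (d : ℕ × ℕ).1 → (c : ℕ × ℕ).2 < (d : ℕ × ℕ).2 → f c < f d) ∧
      (∀ c d : C, (c : ℕ × ℕ).2 = (d : ℕ × ℕ).2 → (c : ℕ × ℕ).1 < (d : ℕ × ℕ).1 → f c < f d))
    (Classical.decPred _) Finset.univ).card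

lemma sytCard_eq_auxCard (N : ℕ) (lam : ℕ → ℕ) : sytCard N lam = auxCard (sytCells N lam) := rfl

lemma sytCells_box {N M : ℕ} {mu : ℕ → ℕ} (hMN : M ≤ N) (h0 : mu 0 ≤ M)
    (hanti : Antitone mu) (hsupp : ∀ i, M ≤ i → mu i = 0) :
    sytCells N mu = sytCells M mu := by
  ext ⟨a, b⟩
  simp only [sytCells, mem_filter, mem_product, mem_range]
  constructor
  · rintro ⟨⟨ha, hb⟩, h⟩
    have haM : a < M := by
      by_contra hc
      rw [hsupp a (le_of_not_gt hc)] at h; omega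
    exact ⟨⟨haM, lt_of_lt_of_le h ((hanti (Nat.zero_le a)).trans h0)⟩, h⟩
  · rintro ⟨⟨ha, hb⟩, h⟩
    exact ⟨⟨lt_of_lt_of_le ha hMN, lt_of_lt_of_le hb hMN⟩, h⟩

lemma sytCard_box {N M : ℕ} {mu : ℕ → ℕ} (hMN : M ≤ N) (h0 : mu 0 ≤ M)
    (hanti : Antitone mu) (hsupp : ∀ i, M ≤ i → mu i = 0) :
    sytCard N mu = sytCard M mu := by
  rw [sytCard_eq_auxCard, sytCard_eq_auxCard, sytCells_box hMN h0 hanti hsupp]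

lemma sytCells_eq_biUnion (N : ℕ) (mu : ℕ → ℕ) (hanti : Antitone mu) (h0 : mu 0 ≤ N) :
    sytCells N mu = (range N).biUnion (fun i => (range (mu i)).image (fun j => (i, j))) := by
  ext ⟨a, b⟩
  simp only [sytCells, mem_filter, mem_product, mem_range, mem_biUnion, mem_image]
  constructor
  · rintro ⟨⟨ha, hb⟩, h⟩; exact ⟨a, ha, b, h, rfl⟩
  · rintro ⟨i, hi, j, hj, h⟩
    injection h with h1 h2
    subst h1; subst h2
    exact ⟨⟨hi, lt_of_lt_of_le hj ((hanti (Nat.zero_le i)).trans h0)⟩, hj⟩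

lemma sytCells_card (N : ℕ) (mu : ℕ → ℕ) (hanti : Antitone mu) (h0 : mu 0 ≤ N) :
    (sytCells N mu).card = ∑ i ∈ range N, mu i := by
  rw [sytCells_eq_biUnion N mu hanti h0, card_biUnion]
  · refine Finset.sum_congr rfl fun i _ => ?_
    rw [Finset.card_image_of_injective _ (fun x y h => by simpa using h), card_range]
  · intro x hx y hy hxy
    simp only [Finset.disjoint_left, mem_image]
    rintro ⟨a, b⟩ ⟨j, hj, h⟩ ⟨j', hj', h'⟩
    apply hxy
    cases h; cases h'; rfl

def decr (mu : ℕ → ℕ) (i : ℕ) : ℕ → ℕ := fun j => if j = i then mu i - 1 else mu j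

lemma sytCells_decr (N : ℕ) (mu : ℕ → ℕ) (i : ℕ) (hiN : i < N) (h0 : mu 0 ≤ N)
    (hanti : Antitone mu) (hcor : mu (i+1) < mu i) :
    sytCells N (decr mu i) = (sytCells N mu).erase (i, mu i - 1) := by
  have hmuiN : mu i ≤ N := le_trans (hanti (Nat.zero_le i)) h0
  ext ⟨a, b⟩
  simp only [sytCells, mem_filter, mem_product, mem_range, mem_erase, Prod.mk.injEq, ne_eq,
    not_and]
  simp only [decr]
  split_ifs with h
  · subst h; omega
  · omega

noncomputable def topRow (N : ℕ) (mu : ℕ → ℕ) (f : sytCells N mu → Fin (sytCells N mu).card) : ℕ :=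
  if h : ∃ c, ((f c : ℕ) + 1 = (sytCells N mu).card) then (h.choose : ℕ × ℕ).1 else 0

lemma topRow_spec {N : ℕ} {mu : ℕ → ℕ} {f : sytCells N mu → Fin (sytCells N mu).card}
    (hex : ∃ c, ((f c : ℕ) + 1 = (sytCells N mu).card)) :
    ∃ c, ((f c : ℕ) + 1 = (sytCells N mu).card) ∧ (c : ℕ × ℕ).1 = topRow N mu f :=
  ⟨hex.choose, hex.choose_spec, by rw [topRow, dif_pos hex]⟩

lemma topRow_eq {N : ℕ} {mu : ℕ → ℕ} {f : sytCells N mu → Fin (sytCells N mu).card}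
    (hinj : Function.Injective f) (c : sytCells N mu)
    (hc : (f c : ℕ) + 1 = (sytCells N mu).card) : topRow N mu f = (c : ℕ × ℕ).1 := by
  obtain ⟨c', hc', hr⟩ := topRow_spec ⟨c, hc⟩
  have : c' = c := hinj (Fin.ext (by omega))
  rw [← hr, this]

/-- the cell holding the top value of an SYT is a removable corner -/
lemma top_cell_corner {N : ℕ} {mu : ℕ → ℕ} (hanti : Antitone mu) (h0 : mu 0 ≤ N)
    (hframe : ∀ j, N ≤ j → mu j = 0) (hcard : (sytCells N mu).card = N)
    {f : sytCells N mu → Fin (sytCells N mu).card} (hf : IsSYT N mu f)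
    (c : sytCells N mu) (hc : (f c : ℕ) + 1 = N) :
    (c : ℕ × ℕ).2 + 1 = mu (c : ℕ × ℕ).1 ∧ mu ((c : ℕ × ℕ).1 + 1) < mu (c : ℕ × ℕ).1 := by
  obtain ⟨⟨a, b⟩, hm⟩ := c
  have hmem : a < N ∧ b < N ∧ b < mu a := by
    have := hm
    simp only [sytCells, mem_filter, mem_product, mem_range] at this
    exact ⟨this.1.1, this.1.2, this.2⟩
  have hmuaN : mu a ≤ N := le_trans (hanti (Nat.zero_le a)) h0
  -- no cell to the right
  have hright : ¬ (b + 1 < mu a) := by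
    intro h
    have hdm : ((a, b+1) : ℕ × ℕ) ∈ sytCells N mu := by
      simp only [sytCells, mem_filter, mem_product, mem_range]
      exact ⟨⟨hmem.1, by omega⟩, h⟩
    have hlt := hf.2.1 ⟨(a,b), hm⟩ ⟨(a,b+1), hdm⟩ rfl (by simp)
    have hb2 := (f ⟨(a,b+1), hdm⟩).isLt
    rw [Fin.lt_def] at hlt
    omega
  -- no cell below
  have hbelow : ¬ (b < mu (a+1)) := by
    intro h
    have haN : a + 1 < N := by
      rcases lt_or_ge (a+1) N with h' | h'
      · exact h'
      · rw [hframe _ h'] at h; omega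
    have hdm : ((a+1, b) : ℕ × ℕ) ∈ sytCells N mu := by
      simp only [sytCells, mem_filter, mem_product, mem_range]
      exact ⟨⟨haN, hmem.2.1⟩, h⟩
    have hlt := hf.2.2 ⟨(a,b), hm⟩ ⟨(a+1,b), hdm⟩ rfl (by simp)
    have hb2 := (f ⟨(a+1,b), hdm⟩).isLt
    rw [Fin.lt_def] at hlt
    omega
  simp only
  omega

lemma corner_fiber (N : ℕ) (mu : ℕ → ℕ) (hanti : Antitone mu) (hN : 1 ≤ N)
    (h0 : mu 0 ≤ N) (hcard : (sytCells N mu).card = N)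
    (i : ℕ) (hiN : i < N) (hcor : mu (i+1) < mu i)
    (hccmem : (i, mu i - 1) ∈ sytCells N mu) :
    (@Finset.filter _ (fun f => IsSYT N mu f ∧ (f ⟨(i, mu i - 1), hccmem⟩ : ℕ) + 1 = N)
      (Classical.decPred _) Finset.univ).card = sytCard N (decr mu i) := by
  have hE : sytCells N (decr mu i) = (sytCells N mu).erase (i, mu i - 1) :=
    sytCells_decr N mu i hiN h0 hanti hcor
  have hcard' : (sytCells N (decr mu i)).card = N - 1 := by
    rw [hE, Finset.card_erase_of_mem hccmem, hcard]
  have hsub : ∀ d : ℕ × ℕ, d ∈ sytCells N (decr mu i) → d ∈ sytCells N mu := by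
    rw [hE]; exact fun d hd => Finset.mem_of_mem_erase hd
  have hne : ∀ d : ℕ × ℕ, d ∈ sytCells N (decr mu i) → d ≠ (i, mu i - 1) := by
    rw [hE]; exact fun d hd => Finset.ne_of_mem_erase hd
  have hmem' : ∀ c : ℕ × ℕ, c ∈ sytCells N mu → c ≠ (i, mu i - 1) →
      c ∈ sytCells N (decr mu i) := by
    rw [hE]; exact fun c hc hcne => Finset.mem_erase.2 ⟨hcne, hc⟩
  rw [sytCard]
  refine Finset.card_bij'
    (fun f hf => fun d => (⟨(f ⟨d.1, hsub d.1 d.2⟩ : ℕ), ?_⟩ : Fin (sytCells N (decr mu i)).card))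
    (fun g hg => fun c => if h : (c : ℕ × ℕ) = (i, mu i - 1) then
        (⟨N - 1, by omega⟩ : Fin (sytCells N mu).card)
      else ⟨(g ⟨c.1, hmem' c.1 c.2 h⟩ : ℕ), by
        have := (g ⟨c.1, hmem' c.1 c.2 h⟩).isLt; omega⟩)
    ?_ ?_ ?_ ?_
  -- value bound for the forward map
  · simp only [Finset.mem_filter, Finset.mem_univ, true_and] at hf
    obtain ⟨hsyt, htop⟩ := hf
    have h1 := (f ⟨d.1, hsub d.1 d.2⟩).isLt
    have h2 : (f ⟨d.1, hsub d.1 d.2⟩ : ℕ) ≠ N - 1 := by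
      intro hval
      have heq : f ⟨d.1, hsub d.1 d.2⟩ = f ⟨(i, mu i - 1), hccmem⟩ := Fin.ext (by omega)
      have := congrArg Subtype.val (hsyt.1.1 heq)
      exact (hne d.1 d.2) this
    omega
  -- forward map is an SYT of the decremented shape
  · intro f hf
    simp only [Finset.mem_filter, Finset.mem_univ, true_and] at hf ⊢
    obtain ⟨hsyt, htop⟩ := hf
    refine ⟨?_, ?_, ?_⟩
    · rw [Fintype.bijective_iff_injective_and_card]
      refine ⟨?_, by simp⟩
      intro a b hab
      rw [Fin.ext_iff] at hab
      simp only at hab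
      have : f ⟨a.1, hsub a.1 a.2⟩ = f ⟨b.1, hsub b.1 b.2⟩ := Fin.ext hab
      have h3 := hsyt.1.1 this
      simp only [Subtype.mk.injEq] at h3
      exact Subtype.ext h3
    · intro c d hrow hcol
      rw [Fin.lt_def]
      simp only
      exact hsyt.2.1 ⟨c.1, hsub c.1 c.2⟩ ⟨d.1, hsub d.1 d.2⟩ hrow hcol
    · intro c d hrow hcol
      rw [Fin.lt_def]
      simp only
      exact hsyt.2.2 ⟨c.1, hsub c.1 c.2⟩ ⟨d.1, hsub d.1 d.2⟩ hrow hcol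
  -- backward map is in the fiber
  · intro g hg
    simp only [Finset.mem_filter, Finset.mem_univ, true_and] at hg ⊢
    obtain ⟨hbij, hrowg, hcolg⟩ := hg
    refine ⟨⟨?_, ?_, ?_⟩, ?_⟩
    · rw [Fintype.bijective_iff_injective_and_card]
      refine ⟨?_, by simp⟩
      intro a b hab
      simp only at hab
      by_cases ha : (a : ℕ × ℕ) = (i, mu i - 1) <;>
        by_cases hb : (b : ℕ × ℕ) = (i, mu i - 1)
      · exact Subtype.ext (ha.trans hb.symm)
      · exfalso
        rw [dif_pos ha, dif_neg hb, Fin.ext_iff] at hab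
        have := (g ⟨b.1, hmem' b.1 b.2 hb⟩).isLt
        simp only at hab
        omega
      · exfalso
        rw [dif_neg ha, dif_pos hb, Fin.ext_iff] at hab
        have := (g ⟨a.1, hmem' a.1 a.2 ha⟩).isLt
        simp only at hab
        omega
      · rw [dif_neg ha, dif_neg hb, Fin.ext_iff] at hab
        simp only at hab
        have : g ⟨a.1, hmem' a.1 a.2 ha⟩ = g ⟨b.1, hmem' b.1 b.2 hb⟩ := Fin.ext hab
        have h3 := hbij.1 this
        simp only [Subtype.mk.injEq] at h3
        exact Subtype.ext h3
    · intro c d hrow hcol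
      by_cases hd : (d : ℕ × ℕ) = (i, mu i - 1)
      · have hcne : (c : ℕ × ℕ) ≠ (i, mu i - 1) := by
          intro h
          have h1 := congrArg Prod.snd h
          have h2 := congrArg Prod.snd hd
          simp only at h1 h2
          omega
        have := (g ⟨c.1, hmem' c.1 c.2 hcne⟩).isLt
        simp only [Fin.lt_def, dif_neg hcne, dif_pos hd]
        omega
      · by_cases hc : (c : ℕ × ℕ) = (i, mu i - 1)
        · exfalso
          have hdmem := d.2
          simp only [sytCells, mem_filter, mem_product, mem_range] at hdmem
          have h1 := congrArg Prod.fst hc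
          have h2 := congrArg Prod.snd hc
          simp only at h1 h2
          have hdi : (d : ℕ × ℕ).1 = i := by omega
          rw [hdi] at hdmem
          omega
        · simp only [Fin.lt_def, dif_neg hc, dif_neg hd]
          exact hrowg ⟨c.1, hmem' c.1 c.2 hc⟩ ⟨d.1, hmem' d.1 d.2 hd⟩ hrow hcol
    · intro c d hrow hcol
      by_cases hd : (d : ℕ × ℕ) = (i, mu i - 1)
      · have hcne : (c : ℕ × ℕ) ≠ (i, mu i - 1) := by
          intro h
          have h1 := congrArg Prod.fst h
          have h2 := congrArg Prod.fst hd
          simp only at h1 h2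
          omega
        have := (g ⟨c.1, hmem' c.1 c.2 hcne⟩).isLt
        simp only [Fin.lt_def, dif_neg hcne, dif_pos hd]
        omega
      · by_cases hc : (c : ℕ × ℕ) = (i, mu i - 1)
        · exfalso
          have hdmem := d.2
          simp only [sytCells, mem_filter, mem_product, mem_range] at hdmem
          have h1 := congrArg Prod.fst hc
          have h2 := congrArg Prod.snd hc
          simp only at h1 h2
          have hle : mu (d : ℕ × ℕ).1 ≤ mu (i + 1) := hanti (by omega)
          omega
        · simp only [Fin.lt_def, dif_neg hc, dif_neg hd]
          exact hcolg ⟨c.1, hmem' c.1 c.2 hc⟩ ⟨d.1, hmem' d.1 d.2 hd⟩ hrow hcol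
    · simp
      omega
  -- left inverse
  · intro f hf
    simp only [Finset.mem_filter, Finset.mem_univ, true_and] at hf
    obtain ⟨hsyt, htop⟩ := hf
    funext c
    by_cases hc : (c : ℕ × ℕ) = (i, mu i - 1)
    · have hcell : c = ⟨(i, mu i - 1), hccmem⟩ := Subtype.ext hc
      refine Fin.ext ?_
      simp [hcell]
      omega
    · refine Fin.ext ?_
      simp only [dif_neg hc]
  -- right inverse
  · intro g hg
    funext d
    have hdne := hne d.1 d.2
    refine Fin.ext ?_
    simp only [dif_neg hdne]

lemma corner_rec (N : ℕ) (mu : ℕ → ℕ) (hanti : Antitone mu) (hN : 1 ≤ N)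
    (hsum : ∑ j ∈ range N, mu j = N) (hNzero : mu N = 0) :
    sytCard N mu
      = ∑ i ∈ (range N).filter (fun i => mu (i+1) < mu i), sytCard N (decr mu i) := by
  have h0 : mu 0 ≤ N := by
    have := Finset.single_le_sum (f := mu) (fun j _ => Nat.zero_le _) (mem_range.2 hN)
    omega
  have hframe : ∀ j, N ≤ j → mu j = 0 := fun j hj =>
    Nat.le_antisymm (hNzero ▸ hanti hj) (Nat.zero_le _)
  have hcard : (sytCells N mu).card = N := by rw [sytCells_card N mu hanti h0, hsum]
  have hex : ∀ f : sytCells N mu → Fin (sytCells N mu).card, IsSYT N mu f →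
      ∃ c, ((f c : ℕ) + 1 = (sytCells N mu).card) := by
    intro f hf
    obtain ⟨c, hc⟩ := hf.1.2 ⟨N - 1, by omega⟩
    exact ⟨c, by rw [hc]; (try simp); omega⟩
  rw [sytCard,
    Finset.card_eq_sum_card_fiberwise (f := fun f => topRow N mu f) (t := range N)
      (by
        intro f hf
        simp only [Finset.mem_coe, Finset.mem_filter, Finset.mem_univ, true_and] at hf
        obtain ⟨c, hcv, hrow⟩ := topRow_spec (hex f hf)
        have hm := c.2
        simp only [sytCells, mem_filter, mem_product, mem_range] at hm
        show topRow N mu f ∈ Finset.range N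
        rw [mem_range, ← hrow]
        exact hm.1.1),
    ← Finset.sum_subset (Finset.filter_subset (fun i => mu (i+1) < mu i) (range N))
      (by
        intro i hir hic
        rw [Finset.card_eq_zero, Finset.filter_eq_empty_iff]
        intro f hf htr
        simp only [Finset.mem_filter, Finset.mem_univ, true_and] at hf
        apply hic
        obtain ⟨c, hcv, hrow⟩ := topRow_spec (hex f hf)
        have hcorner := top_cell_corner hanti h0 hframe hcard hf c (by omega)
        rw [Finset.mem_filter]
        refine ⟨hir, ?_⟩
        have : (c : ℕ × ℕ).1 = i := by rw [hrow, htr]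
        rw [← this]
        exact hcorner.2)]
  refine Finset.sum_congr rfl ?_
  intro i hi
  rw [Finset.mem_filter, Finset.mem_range] at hi
  obtain ⟨hiN, hcor⟩ := hi
  have hmuiN : mu i ≤ N := le_trans (hanti (Nat.zero_le i)) h0
  have hccmem : (i, mu i - 1) ∈ sytCells N mu := by
    simp only [sytCells, mem_filter, mem_product, mem_range]
    omega
  have hset : Finset.filter (fun f => topRow N mu f = i)
        (@Finset.filter _ (fun f => IsSYT N mu f) (Classical.decPred _) Finset.univ)
      = @Finset.filter _
          (fun f => IsSYT N mu f ∧ (f ⟨(i, mu i - 1), hccmem⟩ : ℕ) + 1 = N)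
          (Classical.decPred _) Finset.univ := by
    ext f
    simp only [Finset.mem_filter, Finset.mem_univ, true_and]
    constructor
    · rintro ⟨hsyt, htr⟩
      refine ⟨hsyt, ?_⟩
      obtain ⟨c, hcv, hrow⟩ := topRow_spec (hex f hsyt)
      have hcorner := top_cell_corner hanti h0 hframe hcard hsyt c (by omega)
      have hc1 : (c : ℕ × ℕ).1 = i := by rw [hrow, htr]
      have hc2 : (c : ℕ × ℕ).2 = mu i - 1 := by rw [← hc1]; omega
      have hcell : c = ⟨(i, mu i - 1), hccmem⟩ := by
        refine Subtype.ext ?_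
        have : (c : ℕ × ℕ) = ((c : ℕ × ℕ).1, (c : ℕ × ℕ).2) := rfl
        rw [this, hc1, hc2]
      rw [← hcell]
      omega
    · rintro ⟨hsyt, htop⟩
      refine ⟨hsyt, ?_⟩
      have := topRow_eq hsyt.1.1 ⟨(i, mu i - 1), hccmem⟩ (by omega)
      simpa using this
  rw [hset, corner_fiber N mu hanti hN h0 hcard i hiN hcor hccmem]

lemma sytCells_zero (mu : ℕ → ℕ) : sytCells 0 mu = ∅ := by
  simp [sytCells]

lemma sytCard_zero (mu : ℕ → ℕ) : sytCard 0 mu = 1 := by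
  rw [sytCard]
  haveI hempty : IsEmpty {x // x ∈ sytCells 0 mu} :=
    ⟨fun c => by obtain ⟨⟨a,b⟩, h⟩ := c; simp [sytCells] at h⟩
  have hall : ∀ f : sytCells 0 mu → Fin (sytCells 0 mu).card, IsSYT 0 mu f := by
    intro f
    refine ⟨⟨fun a b _ => (hempty.false a).elim, fun y => ?_⟩,
      fun c => (hempty.false c).elim, fun c => (hempty.false c).elim⟩
    exfalso
    have hy := y.isLt
    have hz : (sytCells 0 mu).card = 0 := by rw [sytCells_zero]; rfl
    omega
  have huniv : (@Finset.filter _ (fun f => IsSYT 0 mu f) (Classical.decPred _) Finset.univ)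
      = Finset.univ := by
    ext f
    simp only [Finset.mem_filter, Finset.mem_univ, true_and, iff_true]
    exact hall f
  rw [huniv, Finset.card_univ]
  exact Fintype.card_eq_one_iff.2
    ⟨fun c => (hempty.false c).elim, fun g => funext fun c => (hempty.false c).elim⟩

lemma descPoch_diff (d : ℕ) (x : ℚ) :
    (descPochhammer ℚ (d+1)).eval (x+1) - (descPochhammer ℚ (d+1)).eval x
      = (d+1) * (descPochhammer ℚ d).eval x := by
  have h1 : (descPochhammer ℚ (d+1)).eval (x+1) = (x+1) * (descPochhammer ℚ d).eval x := by
    rw [descPochhammer_succ_left]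
    simp [Polynomial.eval_comp]
  rw [h1, descPochhammer_succ_eval]
  ring

lemma exists_antideriv_aux : ∀ (n : ℕ) (q : Polynomial ℚ), q.natDegree ≤ n →
    ∃ Q : Polynomial ℚ, Q.degree = q.degree + 1 ∧
      Q.leadingCoeff = q.leadingCoeff / (q.natDegree + 1) ∧
      ∀ x : ℚ, Q.eval (x + 1) - Q.eval x = q.eval x := by
  intro n
  induction n with
  | zero =>
    intro q hq
    by_cases h0 : q = 0
    · exact ⟨0, by simp [h0], by simp [h0], by simp [h0]⟩
    · have hC : q = Polynomial.C (q.coeff 0) := Polynomial.eq_C_of_natDegree_le_zero hq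
      have hc0 : q.coeff 0 ≠ 0 := fun h => h0 (by rw [hC, h, map_zero])
      refine ⟨Polynomial.C (q.coeff 0) * Polynomial.X, ?_, ?_, ?_⟩
      · rw [Polynomial.degree_C_mul hc0, Polynomial.degree_X, hC, Polynomial.degree_C hc0]
        norm_num
      · have hq0 : q.natDegree = 0 := Nat.le_zero.1 hq
        rw [hq0, Polynomial.leadingCoeff_C_mul_X, hC, Polynomial.leadingCoeff_C]
        norm_num
      · intro x
        rw [hC]
        simp
        ring
  | succ n IH =>
    intro q hq
    by_cases h0 : q = 0
    · exact ⟨0, by simp [h0], by simp [h0], by simp [h0]⟩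
    by_cases hle : q.natDegree ≤ n
    · exact IH q hle
    have hd : q.natDegree = n + 1 := le_antisymm hq (not_le.1 hle)
    set c := q.leadingCoeff with hc
    have hcne : c ≠ 0 := Polynomial.leadingCoeff_ne_zero.2 h0
    set r := q - Polynomial.C c * descPochhammer ℚ (n+1) with hr
    have hdpdeg : (Polynomial.C c * descPochhammer ℚ (n+1)).degree = ((n+1 : ℕ) : WithBot ℕ) := by
      rw [Polynomial.degree_C_mul hcne, Polynomial.degree_eq_natDegree
        (monic_descPochhammer ℚ (n+1)).ne_zero, descPochhammer_natDegree]
    have hrlt : r.degree < q.degree := by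
      refine Polynomial.degree_sub_lt ?_ h0 ?_
      · rw [hdpdeg, Polynomial.degree_eq_natDegree h0, hd]
      · rw [Polynomial.leadingCoeff_mul, Polynomial.leadingCoeff_C,
          (monic_descPochhammer ℚ (n+1)).leadingCoeff, mul_one]
    have hrle : r.natDegree ≤ n := by
      by_cases hr0 : r = 0
      · simp [hr0]
      · have := Polynomial.natDegree_lt_natDegree hr0 hrlt
        omega
    obtain ⟨R, hRdeg, hRlead, hReval⟩ := IH r hrle
    have hn2 : ((n : ℚ) + 2) ≠ 0 := by positivity
    have hcd : c / ((n : ℚ) + 2) ≠ 0 := div_ne_zero hcne hn2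
    have hdeg1 : (Polynomial.C (c / ((n:ℚ)+2)) * descPochhammer ℚ (n+2)).degree
        = ((n+2 : ℕ) : WithBot ℕ) := by
      rw [Polynomial.degree_C_mul hcd, Polynomial.degree_eq_natDegree
        (monic_descPochhammer ℚ (n+2)).ne_zero, descPochhammer_natDegree]
    have hRlt : R.degree < ((n+2 : ℕ) : WithBot ℕ) := by
      rw [hRdeg]
      rcases eq_or_ne r 0 with hr0 | hr0
      · rw [hr0, Polynomial.degree_zero]
        rw [show ((⊥ : WithBot ℕ) + 1) = ⊥ from rfl]
        exact WithBot.bot_lt_coe _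
      · rw [Polynomial.degree_eq_natDegree hr0]
        have hlt2 : r.natDegree + 1 < n + 2 := by
          have := Polynomial.natDegree_lt_natDegree hr0 hrlt
          omega
        exact_mod_cast hlt2
    have hdegQ : (Polynomial.C (c / ((n:ℚ)+2)) * descPochhammer ℚ (n+2) + R).degree
        = ((n+2 : ℕ) : WithBot ℕ) := by
      rw [Polynomial.degree_add_eq_left_of_degree_lt (by rw [hdeg1]; exact hRlt), hdeg1]
    refine ⟨Polynomial.C (c / ((n:ℚ)+2)) * descPochhammer ℚ (n+2) + R, ?_, ?_, ?_⟩
    · rw [hdegQ, Polynomial.degree_eq_natDegree h0, hd]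
      norm_cast
    · have hnatQ : (Polynomial.C (c / ((n:ℚ)+2)) * descPochhammer ℚ (n+2) + R).natDegree
          = n + 2 := Polynomial.natDegree_eq_of_degree_eq_some hdegQ
      rw [Polynomial.leadingCoeff, hnatQ, Polynomial.coeff_add, Polynomial.coeff_C_mul,
        Polynomial.coeff_eq_zero_of_degree_lt hRlt, add_zero]
      have hdpc : (descPochhammer ℚ (n+2)).coeff (n+2) = 1 := by
        have := (monic_descPochhammer ℚ (n+2)).leadingCoeff
        rw [Polynomial.leadingCoeff, descPochhammer_natDegree] at this
        exact this
      rw [hdpc, mul_one, hd]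
      push_cast
      ring
    · intro x
      have h2 := hReval x
      have h3 : r.eval x = q.eval x - c * (descPochhammer ℚ (n+1)).eval x := by
        rw [hr]
        simp
      simp only [Polynomial.eval_add, Polynomial.eval_mul, Polynomial.eval_C]
      calc c / ((n:ℚ)+2) * (descPochhammer ℚ (n+2)).eval (x+1) + R.eval (x+1)
            - (c / ((n:ℚ)+2) * (descPochhammer ℚ (n+2)).eval x + R.eval x)
          = c / ((n:ℚ)+2) * ((descPochhammer ℚ (n+2)).eval (x+1)
              - (descPochhammer ℚ (n+2)).eval x) + (R.eval (x+1) - R.eval x) := by ring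
        _ = c / ((n:ℚ)+2) * (((n:ℚ)+2) * (descPochhammer ℚ (n+1)).eval x) + r.eval x := by
            rw [h2]
            congr 1
            rw [show (n+2) = (n+1)+1 from rfl, descPoch_diff (n+1) x]
            push_cast
            ring
        _ = q.eval x := by
            rw [h3]
            field_simp
            ring

lemma poly_of_rec (f : ℕ → ℚ) (q Q : Polynomial ℚ)
    (hQ : ∀ x : ℚ, Q.eval (x + 1) - Q.eval x = q.eval x)
    (n₀ : ℕ) (hrec : ∀ n, n₀ ≤ n → f (n + 1) = f n + q.eval (n : ℚ)) :
    ∀ n, n₀ ≤ n → f n = Q.eval (n : ℚ) + (f n₀ - Q.eval (n₀ : ℚ)) := by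
  intro n hn
  induction n, hn using Nat.le_induction with
  | base => ring
  | succ m hm IH =>
    have h1 := hQ (m : ℚ)
    have h2 := hrec m hm
    push_cast
    rw [h2, IH]
    linarith

theorem dim_padded_aux : ∀ k : ℕ, ∀ lam : ℕ → ℕ,
    Antitone lam → (∑ i ∈ Finset.range k, lam i = k) → (∀ i, k ≤ i → lam i = 0) →
    ∃ p : Polynomial ℚ,
      p.degree = (k : ℕ) ∧
      p.leadingCoeff = (sytCard k lam : ℚ) / (Nat.factorial k : ℚ) ∧
      ∀ n : ℕ, k + lam 0 ≤ n →
        ((sytCard n (paddedRows k n lam) : ℚ) = p.eval (n : ℚ)) := by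
  intro k
  induction k using Nat.strong_induction_on with
  | _ k IH =>
  intro lam hanti hsum hsupp
  rcases Nat.eq_zero_or_pos k with rfl | hk
  · -- k = 0 : single padded row, always exactly one SYT
    have hlam0 : ∀ i, lam i = 0 := fun i => hsupp i (Nat.zero_le i)
    have hone : ∀ n : ℕ, sytCard n (paddedRows 0 n lam) = 1 := by
      intro n
      induction n with
      | zero => exact sytCard_zero _
      | succ n IHn =>
        set mu := paddedRows 0 (n+1) lam with hmu
        have hmu0 : mu 0 = n + 1 := by simp [hmu, paddedRows]
        have hmus : ∀ j, mu (j+1) = 0 := by intro j; simp [hmu, paddedRows, hlam0]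
        have hmuanti : Antitone mu := antitone_nat_of_succ_le (by
          intro j
          cases j with
          | zero => rw [hmus 0]; omega
          | succ jj => rw [hmus, hmus])
        have hmusum : ∑ j ∈ range (n+1), mu j = n + 1 := by
          rw [Finset.sum_range_succ']
          have h1 : ∑ j ∈ range n, mu (j+1) = 0 :=
            Finset.sum_eq_zero fun j _ => hmus j
          rw [h1, hmu0]
          omega
        have hcrec := corner_rec (n+1) mu hmuanti (by omega) hmusum (by
          cases n with
          | zero => exact hmus 0
          | succ nn => exact hmus (nn+1))
        have hcset : (range (n+1)).filter (fun j => mu (j+1) < mu j) = {0} := by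
          ext j
          simp only [Finset.mem_filter, Finset.mem_range, Finset.mem_singleton]
          constructor
          · rintro ⟨hj1, hj2⟩
            cases j with
            | zero => rfl
            | succ jj => rw [hmus, hmus] at hj2; omega
          · rintro rfl
            rw [hmus 0, hmu0]
            omega
        rw [hcset, Finset.sum_singleton] at hcrec
        have hfun : decr mu 0 = paddedRows 0 n lam := by
          funext j
          cases j with
          | zero => simp [decr, hmu, paddedRows]
          | succ jj => simp [decr, hmu, paddedRows]
        rw [hcrec, hfun]
        rw [sytCard_box (Nat.le_succ n) (by simp [paddedRows])
          (antitone_nat_of_succ_le (by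
            intro j
            cases j with
            | zero => simp [paddedRows, hlam0]
            | succ jj => simp [paddedRows, hlam0]))
          (by
            intro i hi
            cases i with
            | zero => simp [paddedRows]; omega
            | succ ii => simp [paddedRows, hlam0])]
        exact IHn
    refine ⟨Polynomial.C 1, ?_, ?_, ?_⟩
    · rw [Polynomial.degree_C one_ne_zero]
      rfl
    · rw [Polynomial.leadingCoeff_C, sytCard_zero]
      norm_num
    · intro n _
      rw [hone n]
      simp
  · -- k ≥ 1
    obtain ⟨m, rfl⟩ : ∃ m, k = m + 1 := ⟨k - 1, by omega⟩
    have hlam0pos : 1 ≤ lam 0 := by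
      by_contra hc
      push_neg at hc
      have hall : ∀ i ∈ range (m+1), lam i = 0 := fun i _ =>
        Nat.le_antisymm (le_trans (hanti (Nat.zero_le i)) (by omega)) (Nat.zero_le _)
      rw [Finset.sum_eq_zero hall] at hsum
      omega
    have hlam0le : lam 0 ≤ m + 1 := by
      have := Finset.single_le_sum (f := lam) (fun j _ => Nat.zero_le _)
        (Finset.mem_range.2 (show 0 < m + 1 by omega))
      omega
    set corners := (range (m+1)).filter (fun i => lam (i+1) < lam i) with hcorners
    have hcmem : ∀ i ∈ corners, i < m + 1 ∧ lam (i+1) < lam i := by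
      intro i hi
      rw [hcorners, Finset.mem_filter, Finset.mem_range] at hi
      exact hi
    -- nonempty corners
    have hcne : corners.Nonempty := by
      have hex0 : ∃ j, lam j = 0 := ⟨m+1, hsupp (m+1) le_rfl⟩
      set j₀ := Nat.find hex0 with hj₀
      have hj₀pos : 1 ≤ j₀ := by
        rcases Nat.eq_zero_or_pos j₀ with h | h
        · have := Nat.find_spec hex0
          rw [← hj₀, h] at this
          omega
        · exact h
      have hja : lam (j₀ - 1) ≠ 0 := Nat.find_min hex0 (by omega)
      have hjb : lam j₀ = 0 := Nat.find_spec hex0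
      refine ⟨j₀ - 1, ?_⟩
      rw [hcorners, Finset.mem_filter, Finset.mem_range]
      have hj1 : j₀ - 1 + 1 = j₀ := by omega
      constructor
      · by_contra hc
        push_neg at hc
        exact hja (hsupp _ (by omega))
      · rw [hj1, hjb]
        omega
    -- facts about decremented partitions
    have hdecr_anti : ∀ i ∈ corners, Antitone (decr lam i) := by
      intro i hi
      obtain ⟨him, hcor⟩ := hcmem i hi
      refine antitone_nat_of_succ_le ?_
      intro j
      rcases eq_or_ne j i with rfl | hne
      · simp [decr]
        omega
      · simp only [decr, if_neg hne]
        split_ifs with h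
        · have h2 : lam i ≤ lam j := hanti (by omega)
          omega
        · exact hanti (Nat.le_succ j)
    have hdecr_supp : ∀ i ∈ corners, ∀ j, m ≤ j → decr lam i j = 0 := by
      intro i hi j hj
      obtain ⟨him, hcor⟩ := hcmem i hi
      have hone : ∀ a ∈ range (m+1), (1:ℕ) ≤ lam a → True := fun _ _ _ => trivial
      simp only [decr]
      split_ifs with h
      · -- j = i, and m <= j = i < m+1 so i = m
        by_contra hc
        have h2 : 2 ≤ lam i := by omega
        have hall1 : ∀ a ∈ Finset.range (m+1), (1:ℕ) ≤ lam a := by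
          intro a ha
          rw [Finset.mem_range] at ha
          have : lam i ≤ lam a := hanti (by omega)
          omega
        have hlt := Finset.sum_lt_sum (s := Finset.range (m+1))
          (f := fun _ : ℕ => (1:ℕ)) (g := lam) hall1
          ⟨i, Finset.mem_range.2 (by omega), (show (1:ℕ) < lam i by omega)⟩
        rw [Finset.sum_const, Finset.card_range, smul_eq_mul, mul_one, hsum] at hlt
        omega
      · rcases Nat.lt_or_ge j (m+1) with hj2 | hj2
        · -- j = m, i < m : show lam j = 0
          by_contra hc
          have h1m : 1 ≤ lam j := by omega
          have h2i : 2 ≤ lam i := by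
            have : lam j ≤ lam (i+1) := hanti (by omega)
            omega
          have hall1 : ∀ a ∈ Finset.range (m+1), (1:ℕ) ≤ lam a := by
            intro a ha
            rw [Finset.mem_range] at ha
            have : lam j ≤ lam a := hanti (by omega)
            omega
          have hlt := Finset.sum_lt_sum (s := Finset.range (m+1))
            (f := fun _ : ℕ => (1:ℕ)) (g := lam) hall1
            ⟨i, Finset.mem_range.2 (by omega), (show (1:ℕ) < lam i by omega)⟩
          rw [Finset.sum_const, Finset.card_range, smul_eq_mul, mul_one, hsum] at hlt
          omega
        · exact hsupp j hj2
    have hdecr_sum : ∀ i ∈ corners, ∑ j ∈ range m, decr lam i j = m := by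
      intro i hi
      obtain ⟨him, hcor⟩ := hcmem i hi
      have hsum1 : ∑ j ∈ range (m+1), decr lam i j = m := by
        have hupd : ∀ j, decr lam i j = Function.update lam i (lam i - 1) j := by
          intro j
          rw [Function.update_apply]
          rfl
        rw [Finset.sum_congr rfl fun j _ => hupd j,
          Finset.sum_update_of_mem (Finset.mem_range.2 him)]
        have := Finset.add_sum_erase (Finset.range (m+1)) lam (Finset.mem_range.2 him)
        have hsd : (Finset.range (m+1)) \ {i} = (Finset.range (m+1)).erase i :=
          Finset.sdiff_singleton_eq_erase i (Finset.range (m+1))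
        rw [hsd]
        omega
      rw [Finset.sum_range_succ] at hsum1
      rw [hdecr_supp i hi m le_rfl] at hsum1
      omega
    -- IH polynomials for the decremented partitions
    have hIH : ∀ i, i ∈ corners → ∃ p : Polynomial ℚ,
        p.degree = (m : ℕ) ∧
        p.leadingCoeff = (sytCard m (decr lam i) : ℚ) / (Nat.factorial m : ℚ) ∧
        ∀ n : ℕ, m + decr lam i 0 ≤ n →
          ((sytCard n (paddedRows m n (decr lam i)) : ℚ) = p.eval (n : ℚ)) := by
      intro i hi
      exact IH m (by omega) (decr lam i) (hdecr_anti i hi) (hdecr_sum i hi)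
        (hdecr_supp i hi)
    choose! P hPdeg hPlead hPeval using hIH
    set q : Polynomial ℚ := ∑ i ∈ corners, P i with hq
    -- branching rule
    have hbox_decr : ∀ i ∈ corners, sytCard (m+1) (decr lam i) = sytCard m (decr lam i) := by
      intro i hi
      obtain ⟨him, hcor⟩ := hcmem i hi
      refine sytCard_box (Nat.le_succ m) ?_ (hdecr_anti i hi) (hdecr_supp i hi)
      -- decr lam i 0 ≤ m
      simp only [decr]
      split_ifs with h
      · subst h; omega
      · -- i ≥ 1 : lam 0 + lam 1 ≤ m + 1 with lam 1 ≥ 1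
        have hi1 : 1 ≤ i := by omega
        have hl1 : 1 ≤ lam 1 := by
          have h1 : lam (i+1) < lam i := hcor
          have h2 : lam i ≤ lam 1 := hanti hi1
          omega
        have hm1 : 1 ≤ m := by
          by_contra hc
          push_neg at hc
          interval_cases m
          · omega
        have hsub : Finset.range 2 ⊆ Finset.range (m+1) := Finset.range_subset_range.2 (by omega)
        have h01 : lam 0 + lam 1 ≤ m + 1 := by
          have := Finset.sum_le_sum_of_subset (f := lam) hsub
          rw [hsum] at this
          have h2 : ∑ j ∈ range 2, lam j = lam 0 + lam 1 := by
            rw [Finset.sum_range_succ, Finset.sum_range_one]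
          omega
        omega
    have hbr : sytCard (m+1) lam = ∑ i ∈ corners, sytCard m (decr lam i) := by
      have hc := corner_rec (m+1) lam hanti (by omega) hsum (hsupp (m+1) le_rfl)
      rw [← hcorners] at hc
      rw [hc]
      exact Finset.sum_congr rfl fun i hi => hbox_decr i hi
    -- q facts
    have hPne : ∀ i ∈ corners, (P i).natDegree = m := by
      intro i hi
      exact Polynomial.natDegree_eq_of_degree_eq_some (hPdeg i hi)
    have hsytpos : 1 ≤ sytCard (m+1) lam := by
      obtain ⟨i₀, hi₀⟩ := hcne
      have hP0 : P i₀ ≠ 0 := by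
        intro h
        have := hPdeg i₀ hi₀
        rw [h, Polynomial.degree_zero] at this
        exact absurd this (by simp)
      have hlc : (P i₀).leadingCoeff ≠ 0 := Polynomial.leadingCoeff_ne_zero.2 hP0
      rw [hPlead i₀ hi₀] at hlc
      have hxne : (sytCard m (decr lam i₀) : ℚ) ≠ 0 := by
        intro h
        apply hlc
        rw [h, zero_div]
      have h0 : sytCard m (decr lam i₀) ≠ 0 := by
        intro h
        rw [h] at hxne
        exact hxne (by norm_num)
      have h1 : 1 ≤ sytCard m (decr lam i₀) := Nat.pos_of_ne_zero h0
      have h2 : sytCard m (decr lam i₀) ≤ ∑ i ∈ corners, sytCard m (decr lam i) :=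
        Finset.single_le_sum (f := fun i => sytCard m (decr lam i))
          (fun i _ => Nat.zero_le _) hi₀
      omega
    have hqcoeff : q.coeff m = (sytCard (m+1) lam : ℚ) / (Nat.factorial m : ℚ) := by
      rw [hq, Polynomial.finset_sum_coeff]
      have : ∀ i ∈ corners, (P i).coeff m = (sytCard m (decr lam i) : ℚ) / (Nat.factorial m : ℚ) := by
        intro i hi
        have h1 : (P i).coeff m = (P i).leadingCoeff := by
          rw [← hPne i hi, Polynomial.coeff_natDegree]
        rw [h1, hPlead i hi]
      rw [Finset.sum_congr rfl this, ← Finset.sum_div, hbr]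
      push_cast [Nat.cast_sum]
      ring
    have hfacpos : (0:ℚ) < (Nat.factorial m : ℚ) := by
      exact_mod_cast Nat.factorial_pos m
    have hqcne : q.coeff m ≠ 0 := by
      rw [hqcoeff]
      have : (0:ℚ) < (sytCard (m+1) lam : ℚ) := by exact_mod_cast hsytpos
      positivity
    have hqdegle : q.degree ≤ (m : ℕ) := by
      rw [hq]
      refine le_trans (Polynomial.degree_sum_le _ _) ?_
      rw [Finset.sup_le_iff]
      intro i hi
      rw [hPdeg i hi]
    have hqdeg : q.degree = (m : ℕ) :=
      le_antisymm hqdegle (Polynomial.le_degree_of_ne_zero hqcne)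
    have hqnat : q.natDegree = m := Polynomial.natDegree_eq_of_degree_eq_some hqdeg
    have hqlead : q.leadingCoeff = (sytCard (m+1) lam : ℚ) / (Nat.factorial m : ℚ) := by
      rw [Polynomial.leadingCoeff, hqnat, hqcoeff]
    -- recursion in n
    have hrec : ∀ n, (m + 1) + lam 0 ≤ n →
        (sytCard (n+1) (paddedRows (m+1) (n+1) lam) : ℚ)
          = (sytCard n (paddedRows (m+1) n lam) : ℚ) + q.eval (n : ℚ) := by
      intro n hn
      have hkn : m + 1 ≤ n := by omega
      set mu := paddedRows (m+1) (n+1) lam with hmu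
      have hmu0 : mu 0 = n - m := by simp [hmu, paddedRows]
      have hmus : ∀ j, mu (j+1) = lam j := by intro j; simp [hmu, paddedRows]
      have hmuanti : Antitone mu := antitone_nat_of_succ_le (by
        intro j
        cases j with
        | zero => rw [hmus 0, hmu0]; omega
        | succ jj => rw [hmus, hmus]; exact hanti (Nat.le_succ jj))
      have hmusum : ∑ j ∈ range (n+1), mu j = n + 1 := by
        rw [Finset.sum_range_succ']
        have h1 : ∑ j ∈ range n, mu (j+1) = ∑ j ∈ range n, lam j :=
          Finset.sum_congr rfl fun j _ => hmus j
        have h2 : ∑ j ∈ range n, lam j = ∑ j ∈ range (m+1), lam j :=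
          (Finset.sum_subset (Finset.range_subset_range.2 hkn) (fun x hx hnx => by
            rw [Finset.mem_range] at hnx
            exact hsupp x (by omega))).symm
        rw [h1, h2, hsum, hmu0]
        omega
      have hmutop : mu (n+1) = 0 := by
        rw [hmus n]
        exact hsupp n (by omega)
      have hcrec := corner_rec (n+1) mu hmuanti (by omega) hmusum hmutop
      have hcset : (range (n+1)).filter (fun j => mu (j+1) < mu j)
          = insert 0 (corners.image Nat.succ) := by
        ext j
        simp only [Finset.mem_filter, Finset.mem_range, Finset.mem_insert, Finset.mem_image,
          hcorners]
        cases j with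
        | zero =>
          constructor
          · intro _
            exact Or.inl rfl
          · intro _
            refine ⟨by omega, ?_⟩
            rw [hmus 0, hmu0]
            omega
        | succ jj =>
          constructor
          · rintro ⟨hjlt, hcond⟩
            rw [hmus, hmus] at hcond
            have hjm : jj < m + 1 := by
              by_contra hcc
              push_neg at hcc
              rw [hsupp jj hcc, hsupp (jj+1) (by omega)] at hcond
              omega
            exact Or.inr ⟨jj, ⟨hjm, hcond⟩, rfl⟩
          · rintro (h | ⟨x, hx, hxeq⟩)
            · exact absurd h (Nat.succ_ne_zero jj)
            · have hxj : x = jj := by omega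
              subst hxj
              rw [hmus, hmus]
              exact ⟨by omega, hx.2⟩
      rw [hcset, Finset.sum_insert (by simp), Finset.sum_image (by
        intro x _ y _ h
        omega)] at hcrec
      -- the term from the first-row corner
      have hterm0 : sytCard (n+1) (decr mu 0) = sytCard n (paddedRows (m+1) n lam) := by
        have hfun : decr mu 0 = paddedRows (m+1) n lam := by
          funext j
          cases j with
          | zero =>
            simp [decr, hmu, paddedRows]
            omega
          | succ jj =>
            simp [decr, hmu, paddedRows]
        rw [hfun]
        refine sytCard_box (Nat.le_succ n) (by simp [paddedRows])
          (antitone_nat_of_succ_le (by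
            intro j
            cases j with
            | zero => simp [paddedRows]; omega
            | succ jj => simp [paddedRows]; exact hanti (Nat.le_succ jj))) ?_
        intro i hi
        have hi0 : i ≠ 0 := by omega
        simp only [paddedRows, if_neg hi0]
        exact hsupp (i-1) (by omega)
      -- the terms from corners of lam
      have htermS : ∀ i ∈ corners,
          sytCard (n+1) (decr mu (i+1)) = sytCard n (paddedRows m n (decr lam i)) := by
        intro i hi
        obtain ⟨him, hcor⟩ := hcmem i hi
        have hfun : decr mu (i+1) = paddedRows m n (decr lam i) := by
          funext j
          cases j with
          | zero =>
            simp [decr, hmu, paddedRows]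
          | succ jj =>
            by_cases h : jj = i
            · subst h
              simp [decr, hmu, paddedRows]
            · simp [decr, hmu, paddedRows, if_neg (show jj + 1 ≠ i + 1 by omega), if_neg h]
        rw [hfun]
        refine sytCard_box (Nat.le_succ n) (by simp [paddedRows])
          (antitone_nat_of_succ_le (by
            intro j
            cases j with
            | zero =>
              have hd0 : decr lam i 0 ≤ lam 0 := by
                simp only [decr]
                split_ifs with h
                · subst h; omega
                · exact le_rfl
              simp [paddedRows]
              omega
            | succ jj =>
              simp [paddedRows]
              exact hdecr_anti i hi (Nat.le_succ jj))) ?_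
        intro j hj
        have hj0 : j ≠ 0 := by omega
        simp only [paddedRows, if_neg hj0]
        exact hdecr_supp i hi (j-1) (by omega)
      -- put everything together
      have hqev : q.eval (n : ℚ) = ∑ i ∈ corners, (sytCard n (paddedRows m n (decr lam i)) : ℚ) := by
        rw [hq, Polynomial.eval_finset_sum]
        refine Finset.sum_congr rfl fun i hi => ?_
        have hd0 : decr lam i 0 ≤ lam 0 := by
          simp only [decr]
          split_ifs with h
          · subst h; omega
          · exact le_rfl
        exact (hPeval i hi n (by omega)).symm
      rw [hcrec, hterm0, Finset.sum_congr rfl htermS, hqev]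
      push_cast [Nat.cast_sum]
      ring
    obtain ⟨Q, hQdeg, hQlead, hQev⟩ := exists_antideriv_aux m q (le_of_eq hqnat)
    set n₀ := (m + 1) + lam 0 with hn₀
    set p : Polynomial ℚ := Q + Polynomial.C
      ((sytCard n₀ (paddedRows (m+1) n₀ lam) : ℚ) - Q.eval (n₀ : ℚ)) with hp
    have hQdeg' : Q.degree = ((m+1 : ℕ) : WithBot ℕ) := by
      rw [hQdeg, hqdeg, ← Nat.cast_add_one]
    have hpdeg : p.degree = ((m+1 : ℕ) : WithBot ℕ) := by
      rw [hp, Polynomial.degree_add_eq_left_of_degree_lt, hQdeg']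
      refine lt_of_le_of_lt Polynomial.degree_C_le ?_
      rw [hQdeg']
      exact_mod_cast Nat.succ_pos m
    have hQnat : Q.natDegree = m + 1 := Polynomial.natDegree_eq_of_degree_eq_some hQdeg'
    have hpnat : p.natDegree = m + 1 := Polynomial.natDegree_eq_of_degree_eq_some hpdeg
    have hplead : p.leadingCoeff
        = (sytCard (m+1) lam : ℚ) / (Nat.factorial (m+1) : ℚ) := by
      have hQc : Q.coeff (m+1) = Q.leadingCoeff := by
        rw [← hQnat, Polynomial.coeff_natDegree]
      rw [Polynomial.leadingCoeff, hpnat, hp, Polynomial.coeff_add,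
        Polynomial.coeff_C, if_neg (Nat.succ_ne_zero m), add_zero,
        hQc, hQlead, hqlead, hqnat]
      have hfact : (((m+1).factorial : ℕ) : ℚ) = ((m:ℚ)+1) * ((m.factorial : ℕ) : ℚ) := by
        rw [Nat.factorial_succ]
        push_cast
        ring
      rw [hfact, div_div, mul_comm]
    refine ⟨p, hpdeg, hplead, ?_⟩
    intro n hn
    have hkey := poly_of_rec (fun n => (sytCard n (paddedRows (m+1) n lam) : ℚ)) q Q hQev
      n₀ (fun n hn => hrec n hn) n hn
    try simp only at hkey
    rw [hkey, hp]
    simp [Polynomial.eval_add, Polynomial.eval_C]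


/-- For a fixed partition `λ ⊢ k` (with row lengths `lam`) and `n ≥ k + λ_1`, the
dimension of the irreducible `S_n`-representation `ρ_{λ[n]}`, `λ[n] = (n-k, λ)` —
realized as the number of standard Young tableaux of shape `λ[n]` — is a polynomial
function of `n` of degree `k` with leading coefficient `(dim ρ_λ)/k!`. -/
theorem dim_padded_irrep_polynomial (k : ℕ) (lam : ℕ → ℕ)
    (hanti : Antitone lam)
    (hsum : ∑ i ∈ Finset.range k, lam i = k)
    (hsupp : ∀ i, k ≤ i → lam i = 0) :
    ∃ p : Polynomial ℚ,
      p.degree = (k : ℕ) ∧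
      p.leadingCoeff = (sytCard k lam : ℚ) / (Nat.factorial k : ℚ) ∧
      ∀ n : ℕ, k + lam 0 ≤ n →
        ((sytCard n (paddedRows k n lam) : ℚ) = p.eval (n : ℚ)) :=
  dim_padded_aux k lam hanti hsum hsupp
end
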